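/- arXiv:1803.03904 — 9 statements merged into one kernel-verified Lean document; each statement's English description precedes it below -/
import Mathlib

section
/- If (A,B) is a stable, controllable input normal pair (i.e., AA* + BB* = I, all eigenvalues of A have modulus < 1, and the controllability matrix has full rank), and (A',B') = (TAT⁻¹, TB) is also input normal for some invertible matrix T, then T is unitary. -/
/-!
Conjugating by `T⁻¹`, input normality of `(TAT⁻¹, TB)` says that `Q = T⁻¹ (T⁻¹)ᴴ` solves the
Stein equation `Q = A Q Aᴴ + B Bᴴ`, whose other solution is `1`. The difference `D` of two
solutions satisfies `D = Aᵏ D (Aᴴ)ᵏ` for all `k`, and stability forces `Aᵏ → 0` (Gelfand's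
formula), so `D = 0`. Hence `T⁻¹ (T⁻¹)ᴴ = 1`, i.e. `T` is unitary.
-/

open Matrix Filter Topology

theorem tendsto_pow_atTop_nhds_zero_of_spectralRadius_lt_one {A : Type*} [NormedRing A]
    [NormedAlgebra ℂ A] [CompleteSpace A] {a : A} (ha : spectralRadius ℂ a < 1) :
    Tendsto (a ^ ·) atTop (𝓝 0) := by
  obtain ⟨r, hr, hr1⟩ := ENNReal.lt_iff_exists_nnreal_btwn.mp ha
  have hbound : ∀ᶠ k : ℕ in atTop, ‖a ^ k‖ ≤ (r : ℝ) ^ k := by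
    filter_upwards
      [(spectrum.pow_nnnorm_pow_one_div_tendsto_nhds_spectralRadius a).eventually_lt_const hr,
      eventually_ge_atTop 1] with k hk hk1
    have hk0 : (k : ℝ) ≠ 0 := by positivity
    have := ENNReal.rpow_lt_rpow hk (by positivity : (0 : ℝ) < k)
    rw [← ENNReal.rpow_mul, one_div, inv_mul_cancel₀ hk0, ENNReal.rpow_one, ENNReal.rpow_natCast,
      ← ENNReal.coe_pow, ENNReal.coe_lt_coe] at this
    exact_mod_cast this.le
  refine tendsto_zero_iff_norm_tendsto_zero.mpr
    (squeeze_zero' (.of_forall fun _ => norm_nonneg _) hbound ?_)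
  exact tendsto_pow_atTop_nhds_zero_of_lt_one r.2 (by exact_mod_cast hr1)

theorem tendsto_pow_atTop_nhds_zero_of_forall_spectrum_norm_lt_one {A : Type*} [NormedRing A]
    [NormedAlgebra ℂ A] [CompleteSpace A] {a : A} (ha : ∀ μ ∈ spectrum ℂ a, ‖μ‖ < 1) :
    Tendsto (a ^ ·) atTop (𝓝 0) := by
  cases subsingleton_or_nontrivial A
  · simpa only [Subsingleton.elim _ (0 : A)] using tendsto_const_nhds
  refine tendsto_pow_atTop_nhds_zero_of_spectralRadius_lt_one ?_
  simpa using spectrum.spectralRadius_lt_of_forall_lt a (r := 1) fun μ hμ => by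
    exact_mod_cast ha μ hμ

theorem eq_of_stein_eq {R : Type*} [Ring R] [StarRing R] [TopologicalSpace R]
    [IsTopologicalRing R] [ContinuousStar R] [T2Space R] {a x y z : R}
    (ha : Tendsto (a ^ ·) atTop (𝓝 0)) (hx : a * x * star a + z = x)
    (hy : a * y * star a + z = y) : x = y := by
  have hD : a * (x - y) * star a = x - y :=
    calc a * (x - y) * star a = (a * x * star a + z) - (a * y * star a + z) := by noncomm_ring
      _ = x - y := by rw [hx, hy]
  have hDk : ∀ k : ℕ, a ^ k * (x - y) * star a ^ k = x - y := by
    intro k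
    induction k with
    | zero => simp
    | succ k ih =>
      calc a ^ (k + 1) * (x - y) * star a ^ (k + 1)
          = a ^ k * (a * (x - y) * star a) * star a ^ k := by
            rw [pow_succ, pow_succ']; simp only [mul_assoc]
        _ = x - y := by rw [hD, ih]
  have hstar : Tendsto (star a ^ ·) atTop (𝓝 0) := by
    simpa only [star_pow, star_zero] using ha.star
  have hlim := (ha.mul (tendsto_const_nhds (x := x - y))).mul hstar
  simp only [hDk, zero_mul, mul_zero] at hlim
  exact sub_eq_zero.mp (tendsto_const_nhds_iff.mp hlim)

namespace Matrix

variable {n : Type*} [Fintype n] [DecidableEq n]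

theorem stein_eq_of_similar_inputNormal {d α : Type*} [Fintype d] [CommRing α] [StarRing α]
    {A T : Matrix n n α} {B : Matrix n d α} (hT : IsUnit T)
    (h : (T * A * T⁻¹) * (T * A * T⁻¹)ᴴ + (T * B) * (T * B)ᴴ = 1) :
    A * (T⁻¹ * T⁻¹ᴴ) * Aᴴ + B * Bᴴ = T⁻¹ * T⁻¹ᴴ := by
  have hdet := (isUnit_iff_isUnit_det T).mp hT
  have hTT : Tᴴ * T⁻¹ᴴ = 1 := by
    rw [← conjTranspose_mul, nonsing_inv_mul T hdet, conjTranspose_one]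
  have := congrArg (fun M => T⁻¹ * M * T⁻¹ᴴ) h
  simp only [conjTranspose_mul, Matrix.mul_add, Matrix.add_mul, Matrix.mul_assoc, hTT,
    Matrix.mul_one, nonsing_inv_mul_cancel_left _ _ hdet] at this
  simpa only [Matrix.mul_assoc] using this

theorem mem_unitaryGroup_of_inv_mul_conjTranspose_inv {α : Type*} [CommRing α] [StarRing α]
    {T : Matrix n n α} (hT : IsUnit T) (h : T⁻¹ * T⁻¹ᴴ = 1) : T ∈ unitaryGroup n α := by
  rw [mem_unitaryGroup_iff', star_eq_conjTranspose]
  calc Tᴴ * T = (T⁻¹ * T⁻¹ᴴ)⁻¹ := by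
        rw [mul_inv_rev, conjTranspose_nonsing_inv,
          nonsing_inv_nonsing_inv _ ((isUnit_iff_isUnit_det T).mp hT),
          nonsing_inv_nonsing_inv _ ((isUnit_iff_isUnit_det Tᴴ).mp hT.star)]
    _ = 1 := by rw [h, inv_one]

-- Any Banach algebra norm will do for Gelfand's formula; the topology of the conclusion is the
-- usual entrywise one.
attribute [local instance] Matrix.linftyOpNormedRing Matrix.linftyOpNormedAlgebra in
theorem tendsto_pow_atTop_nhds_zero_of_forall_spectrum_norm_lt_one {A : Matrix n n ℂ}
    (hA : ∀ μ ∈ spectrum ℂ A, ‖μ‖ < 1) : Tendsto (A ^ ·) atTop (𝓝 0) :=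
  _root_.tendsto_pow_atTop_nhds_zero_of_forall_spectrum_norm_lt_one hA

end Matrix

theorem stmt0_general {n d : ℕ} (A : Matrix (Fin n) (Fin n) ℂ) (B : Matrix (Fin n) (Fin d) ℂ)
    (T : Matrix (Fin n) (Fin n) ℂ)
    (hIN : A * Aᴴ + B * Bᴴ = 1)
    (hstable : ∀ μ ∈ spectrum ℂ A, ‖μ‖ < 1)
    (hT : IsUnit T)
    (hIN' : (T * A * T⁻¹) * (T * A * T⁻¹)ᴴ + (T * B) * (T * B)ᴴ = 1) :
    T ∈ Matrix.unitaryGroup (Fin n) ℂ := by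
  have hpow := Matrix.tendsto_pow_atTop_nhds_zero_of_forall_spectrum_norm_lt_one hstable
  have hQ := stein_eq_of_similar_inputNormal hT hIN'
  have h1 : A * 1 * Aᴴ + B * Bᴴ = 1 := by rw [Matrix.mul_one]; exact hIN
  exact mem_unitaryGroup_of_inv_mul_conjTranspose_inv hT (eq_of_stein_eq hpow hQ h1)

/-- If `(A,B)` is a stable, controllable input normal pair and `(TAT⁻¹, TB)` is also
input normal for an invertible `T`, then `T` is unitary. -/
theorem stmt0 {n d : ℕ} (A : Matrix (Fin n) (Fin n) ℂ) (B : Matrix (Fin n) (Fin d) ℂ)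
    (T : Matrix (Fin n) (Fin n) ℂ)
    (hIN : A * Aᴴ + B * Bᴴ = 1)
    (hstable : ∀ μ ∈ spectrum ℂ A, ‖μ‖ < 1)
    (hctrb : (Matrix.of fun (i : Fin n) (p : Fin n × Fin d) =>
      (A ^ (p.1 : ℕ) * B) i p.2).rank = n)
    (hT : IsUnit T)
    (hIN' : (T * A * T⁻¹) * (T * A * T⁻¹)ᴴ + (T * B) * (T * B)ᴴ = 1) :
    T ∈ Matrix.unitaryGroup (Fin n) ℂ :=
  stmt0_general A B T hIN hstable hT hIN'
end

section
/- Let A and Â be n×n lower triangular complex matrices with equal diagonals (A_ii = Â_ii for all i), whose diagonal entries are grouped into m consecutive blocks of sizes n_1,...,n_m such that within each block the diagonal value is constant and different blocks have distinct values. If U is unitary with ÂU = UA, then U is block diagonal: U = U_1 ⊕ ... ⊕ U_m with each U_i a unitary n_i × n_i matrix. -/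
open Matrix

/-!
Entry `(i, j)` of `Â U = U A` reads `Â i i * U i j = U i j * A j j` as soon as the entries of `U`
above `(i, j)` in its column and to the right of it in its row vanish. When block `i` precedes
block `j` the two diagonal values differ, so induction on `(i, j)` (rows upwards, columns
leftwards) gives `U i j = 0`: `U` is block lower triangular. The inverse
`Uᴴ` of `U` is then block lower triangular as well, so `U` is block diagonal, and a block diagonal
unitary matrix has unitary diagonal blocks.
-/

namespace Matrix

variable {ι R : Type*} [Fintype ι]

section Triangular

variable [LinearOrder ι]

section

variable [NonUnitalNonAssocSemiring R] {A B U : Matrix ι ι R} {i j : ι}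

theorem IsLowerTriangular.mul_apply_eq_diag_mul (hB : B.IsLowerTriangular)
    (hU : ∀ k < i, U k j = 0) : (B * U) i j = B i i * U i j := by
  rw [mul_apply]
  refine Fintype.sum_eq_single i fun k hki => ?_
  rcases hki.lt_or_gt with hk | hk
  · rw [hU k hk, mul_zero]
  · rw [hB hk, zero_mul]

theorem IsLowerTriangular.mul_apply_eq_mul_diag (hA : A.IsLowerTriangular)
    (hU : ∀ k, j < k → U i k = 0) : (U * A) i j = U i j * A j j := by
  rw [mul_apply]
  refine Fintype.sum_eq_single j fun k hkj => ?_
  rcases hkj.lt_or_gt with hk | hk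
  · rw [hA hk, mul_zero]
  · rw [hU k hk, zero_mul]

end

theorem IsLowerTriangular.blockTriangular_of_mul_eq_mul {α : Type*} [Preorder α]
    [CommRing R] [NoZeroDivisors R] {A B U : Matrix ι ι R}
    (hA : A.IsLowerTriangular) (hB : B.IsLowerTriangular) (hBU : B * U = U * A)
    {f : ι → α} (hf : Monotone f) (hdiag : ∀ i j, f i < f j → B i i ≠ A j j) :
    U.BlockTriangular (OrderDual.toDual ∘ f) := by
  suffices ∀ p : ι × ιᵒᵈ, f p.1 < f (OrderDual.ofDual p.2) → U p.1 (OrderDual.ofDual p.2) = 0 from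
    fun i j hij => this (i, OrderDual.toDual j) hij
  intro p
  induction p using WellFoundedLT.induction with
  | ind p ih =>
  obtain ⟨i, j⟩ := p
  obtain ⟨j, rfl⟩ := OrderDual.toDual.surjective j
  intro (hij : f i < f j)
  have hcol : ∀ k < i, U k j = 0 := fun k hk =>
    ih (k, OrderDual.toDual j) (Prod.mk_lt_mk_of_lt_of_le hk le_rfl) ((hf hk.le).trans_lt hij)
  have hrow : ∀ k, j < k → U i k = 0 := fun k hk =>
    ih (i, OrderDual.toDual k) (Prod.mk_lt_mk_of_le_of_lt le_rfl hk) (hij.trans_le (hf hk.le))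
  have hentry : B i i * U i j = U i j * A j j := by
    rw [← hB.mul_apply_eq_diag_mul hcol, ← hA.mul_apply_eq_mul_diag hrow, hBU]
  have hsub : (B i i - A j j) * U i j = 0 := by linear_combination hentry
  exact (mul_eq_zero.mp hsub).resolve_left (sub_ne_zero.mpr (hdiag i j hij))

end Triangular

theorem toSquareBlock_mul_of_apply_eq_zero {β : Type*} [DecidableEq β]
    [NonUnitalNonAssocSemiring R] {M : Matrix ι ι R} {b : ι → β}
    (hM : ∀ i j, b i ≠ b j → M i j = 0) (N : Matrix ι ι R) (k : β) :
    (M * N).toSquareBlock b k = M.toSquareBlock b k * N.toSquareBlock b k := by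
  ext i j
  simp only [toSquareBlock_def, of_apply, mul_apply]
  rw [← Fintype.sum_subtype_add_sum_subtype (b · = k),
    Fintype.sum_eq_zero (fun l : {x // ¬b x = k} => M i l * N l j)
      fun l => by rw [hM i l fun h => l.2 (h ▸ i.2), zero_mul], add_zero]

section Unitary

variable [DecidableEq ι] [CommRing R] [StarRing R] {U : Matrix ι ι R}

theorem BlockTriangular.apply_eq_zero_of_mem_unitaryGroup {α : Type*} [LinearOrder α]
    {b : ι → α} (hb : U.BlockTriangular b) (hU : U ∈ unitaryGroup ι R) {i j : ι}
    (hij : b i ≠ b j) : U i j = 0 := by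
  have : Invertible U := invertibleOfLeftInverse U (star U) (mem_unitaryGroup_iff'.mp hU)
  rcases hij.lt_or_gt with h | h
  · have h' := blockTriangular_inv_of_blockTriangular hb h
    rwa [inv_eq_left_inv (mem_unitaryGroup_iff'.mp hU), star_apply, star_eq_zero] at h'
  · exact hb h

theorem toSquareBlock_mem_unitaryGroup {β : Type*} [DecidableEq β] (hU : U ∈ unitaryGroup ι R)
    {b : ι → β} (hb : ∀ i j, b i ≠ b j → U i j = 0) (k : β) :
    U.toSquareBlock b k ∈ unitaryGroup _ R := by
  rw [mem_unitaryGroup_iff] at hU ⊢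
  have hstar : star (U.toSquareBlock b k) = (star U).toSquareBlock b k :=
    conjTranspose_submatrix U _ _
  rw [hstar, ← toSquareBlock_mul_of_apply_eq_zero hb, hU]
  exact toBlock_one_self _

end Unitary

end Matrix

/-- Two unitarily similar lower triangular matrices with the same block-constant diagonal
(consecutive blocks with distinct values) are similar via a block diagonal unitary. -/
theorem stmt2 {n m : ℕ} (A Ahat U : Matrix (Fin n) (Fin n) ℂ)
    (f : Fin n → Fin m) (hf : Monotone f)
    (dvals : Fin m → ℂ) (hd : Function.Injective dvals)
    (hA : ∀ i j : Fin n, i < j → A i j = 0)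
    (hAhat : ∀ i j : Fin n, i < j → Ahat i j = 0)
    (hdiagA : ∀ i, A i i = dvals (f i))
    (hdiagAhat : ∀ i, Ahat i i = dvals (f i))
    (hU : U ∈ Matrix.unitaryGroup (Fin n) ℂ)
    (hsim : Ahat * U = U * A) :
    (∀ i j : Fin n, f i ≠ f j → U i j = 0) ∧
    ∀ c : Fin m,
      (Matrix.of fun i j : {i : Fin n // f i = c} => U i.1 j.1) ∈
        Matrix.unitaryGroup {i : Fin n // f i = c} ℂ := by
  have hUtri : U.BlockTriangular (OrderDual.toDual ∘ f) :=
    IsLowerTriangular.blockTriangular_of_mul_eq_mul (fun i j h => hA i j h)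
      (fun i j h => hAhat i j h) hsim hf fun i j hij => by
        rw [hdiagA, hdiagAhat]
        exact hd.ne hij.ne
  have hblock : ∀ i j : Fin n, f i ≠ f j → U i j = 0 := fun i j hij =>
    hUtri.apply_eq_zero_of_mem_unitaryGroup hU hij
  exact ⟨hblock, toSquareBlock_mem_unitaryGroup hU hblock⟩
end

section
/- Let A be an n×n complex matrix with n distinct eigenvalues. If Â₁ and Â₂ are both lower triangular matrices unitarily similar to A with the same ordering of eigenvalues on the diagonal, then Â₂ = E Â₁ E* for some diagonal unitary matrix E. -/
/-!
With `E := U₂ U₁*`, unitary, we have `Â₂ = E Â₁ E*`, i.e. `Â₂ E = E Â₁`. Comparing the `(i, j)`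
entries with `i < j` of this Sylvester-type equation between lower triangular matrices, and
inducting upwards in `i` and downwards in `j`, gives `(Â₂ᵢᵢ - Â₁ⱼⱼ) Eᵢⱼ = 0`; as the diagonal
entries are distinct, `E` is lower triangular. The inverse `E*` of a lower triangular matrix is
lower triangular too, so `E` is also upper triangular, hence diagonal.
-/

open Matrix OrderDual

theorem conj_eq_conj_mul_star_of_mem_unitary {M : Type*} [Monoid M] [StarMul M]
    {A A₁ A₂ U₁ U₂ : M} (hU₁ : U₁ ∈ unitary M)
    (hA₁ : A₁ = U₁ * A * star U₁) (hA₂ : A₂ = U₂ * A * star U₂) :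
    A₂ = U₂ * star U₁ * A₁ * star (U₂ * star U₁) := by
  have hcancel (x : M) : star U₁ * (U₁ * x) = x := by
    rw [← mul_assoc, Unitary.star_mul_self_of_mem hU₁, one_mul]
  simp only [hA₁, hA₂, star_mul, star_star, mul_assoc, hcancel]

theorem mul_eq_mul_of_eq_conj_of_mem_unitary {M : Type*} [Monoid M] [StarMul M]
    {A B U : M} (hU : U ∈ unitary M) (h : B = U * A * star U) : B * U = U * A := by
  rw [h, mul_assoc, Unitary.star_mul_self_of_mem hU, mul_one]

namespace Matrix

variable {m R : Type*} [Fintype m] [LinearOrder m]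

theorem IsLowerTriangular.of_mul_eq_mul [CommRing R] [NoZeroDivisors R]
    {L₁ L₂ X : Matrix m m R} (hL₁ : L₁.IsLowerTriangular) (hL₂ : L₂.IsLowerTriangular)
    (hdiag : ∀ ⦃i j⦄, i < j → L₂ i i ≠ L₁ j j) (h : L₂ * X = X * L₁) :
    X.IsLowerTriangular := by
  intro i j hij
  change i < j at hij
  induction i using WellFoundedLT.induction generalizing j with
  | ind i ihi =>
  induction j using WellFoundedGT.induction with
  | ind j ihj =>
  have hL : (L₂ * X) i j = L₂ i i * X i j := by
    rw [mul_apply]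
    refine Fintype.sum_eq_single i fun k hk => ?_
    rcases hk.lt_or_gt with hk | hk
    · rw [ihi k hk (hk.trans hij), mul_zero]
    · rw [hL₂ hk, zero_mul]
  have hR : (X * L₁) i j = X i j * L₁ j j := by
    rw [mul_apply]
    refine Fintype.sum_eq_single j fun k hk => ?_
    rcases hk.lt_or_gt with hk | hk
    · rw [hL₁ hk, mul_zero]
    · rw [ihj k hk (hij.trans hk), zero_mul]
  have hentry : X i j * (L₂ i i - L₁ j j) = 0 := by
    have := congrFun₂ h i j
    rw [hL, hR] at this
    linear_combination this
  exact (mul_eq_zero.mp hentry).resolve_right (sub_ne_zero.mpr (hdiag hij))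

theorem IsLowerTriangular.isDiag_of_mem_unitaryGroup [DecidableEq m] [CommRing R] [StarRing R]
    {U : Matrix m m R} (hU : U.IsLowerTriangular) (hUu : U ∈ unitaryGroup m R) : U.IsDiag := by
  have hUU : U * star U = 1 := mem_unitaryGroup_iff.mp hUu
  let _ := invertibleOfRightInverse U (star U) hUU
  have hstar : (star U).IsLowerTriangular := by
    rw [← inv_eq_right_inv hUU]
    exact blockTriangular_inv_of_blockTriangular hU
  intro i j hij
  rcases hij.lt_or_gt with hij | hij
  · exact hU hij
  · simpa using hstar (show toDual i < toDual j from hij)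

end Matrix

/-- If `Â₁` and `Â₂` are lower triangular matrices, both unitarily similar to a matrix `A`
with distinct eigenvalues, and they have the same diagonal (same eigenvalue ordering),
then `Â₂ = E Â₁ E*` for a diagonal unitary `E`. -/
theorem stmt3 {n : ℕ} (A A1 A2 U1 U2 : Matrix (Fin n) (Fin n) ℂ)
    (hU1 : U1 ∈ Matrix.unitaryGroup (Fin n) ℂ)
    (hU2 : U2 ∈ Matrix.unitaryGroup (Fin n) ℂ)
    (hA1 : A1 = U1 * A * U1ᴴ) (hA2 : A2 = U2 * A * U2ᴴ)
    (hLT1 : ∀ i j : Fin n, i < j → A1 i j = 0)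
    (hLT2 : ∀ i j : Fin n, i < j → A2 i j = 0)
    (hdiag : ∀ i : Fin n, A1 i i = A2 i i)
    (hdistinct : Function.Injective fun i : Fin n => A1 i i) :
    ∃ E : Matrix (Fin n) (Fin n) ℂ,
      E ∈ Matrix.unitaryGroup (Fin n) ℂ ∧ (∀ i j : Fin n, i ≠ j → E i j = 0) ∧
      A2 = E * A1 * Eᴴ := by
  set E := U2 * star U1
  have hE : E ∈ unitaryGroup (Fin n) ℂ := mul_mem hU2 (Unitary.star_mem hU1)
  have hconj : A2 = E * A1 * star E := conj_eq_conj_mul_star_of_mem_unitary hU1 hA1 hA2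
  have hlower : E.IsLowerTriangular :=
    IsLowerTriangular.of_mul_eq_mul (fun i j => hLT1 i j) (fun i j => hLT2 i j)
      (fun i j hij => hdiag i ▸ hdistinct.ne hij.ne)
      (mul_eq_mul_of_eq_conj_of_mem_unitary hE hconj)
  exact ⟨E, hE, hlower.isDiag_of_mem_unitaryGroup hE, hconj⟩
end

section
/- Let (A,B) be a lower triangular input normal pair (A lower triangular, AA* + BB* = I_n) with I_n − BB* of rank n. Then A = L E where L is the Cholesky factor of I_n − BB* (lower triangular with positive diagonal) and E is a diagonal unitary matrix. -/
/-!
Since `A Aᴴ = 1 - B Bᴴ` has full rank, `A` is invertible, so the diagonal entries of the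
triangular matrix `A` are nonzero. Moving their phases `aᵢᵢ / |aᵢᵢ|` into a diagonal
unitary `E` leaves `L = A Eᴴ` lower triangular with diagonal `|aᵢᵢ| > 0`, and
`L Lᴴ = A Aᴴ = 1 - B Bᴴ`.
-/

open Matrix
open scoped ComplexOrder

namespace RCLike

variable {𝕜 : Type*} [RCLike 𝕜]

theorem star_div_norm_mul_div_norm {z : 𝕜} (hz : z ≠ 0) :
    star (z / ‖z‖) * (z / ‖z‖) = 1 := by
  have : (‖z‖ : 𝕜) ≠ 0 := ofReal_ne_zero.mpr (norm_ne_zero_iff.mpr hz)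
  rw [star_div₀, div_mul_div_comm, star_def, conj_mul, conj_ofReal, ← sq,
    div_self (pow_ne_zero 2 this)]

theorem mul_star_div_norm (z : 𝕜) : z * star (z / ‖z‖) = ‖z‖ := by
  rcases eq_or_ne z 0 with rfl | hz
  · simp
  have : (‖z‖ : 𝕜) ≠ 0 := ofReal_ne_zero.mpr (norm_ne_zero_iff.mpr hz)
  rw [star_div₀, star_def, conj_ofReal, mul_div_assoc', mul_conj, div_eq_iff this, sq]

end RCLike

namespace Matrix

variable {ι : Type*} [Fintype ι] [DecidableEq ι]

theorem isUnit_of_rank_eq_card {K : Type*} [Field K] {A : Matrix ι ι K}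
    (h : A.rank = Fintype.card ι) : IsUnit A := by
  rw [← mulVec_surjective_iff_isUnit]
  have : LinearMap.range A.mulVecLin = ⊤ :=
    Submodule.eq_top_of_finrank_eq (by rw [← rank, h, Module.finrank_fintype_fun_eq_card])
  exact LinearMap.range_eq_top.mp this

theorem IsLowerTriangular.diag_ne_zero_of_isUnit [LinearOrder ι] {R : Type*} [CommRing R]
    [IsDomain R] {A : Matrix ι ι R} (hA : A.IsLowerTriangular) (hu : IsUnit A) (i : ι) :
    A i i ≠ 0 := by
  have hdet : ∏ i, A i i ≠ 0 := by
    rw [← det_of_isLowerTriangular A hA]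
    exact ((isUnit_iff_isUnit_det A).mp hu).ne_zero
  exact Finset.prod_ne_zero_iff.mp hdet i (Finset.mem_univ i)

theorem diagonal_mem_unitaryGroup {R : Type*} [CommRing R] [StarRing R] {d : ι → R}
    (hd : ∀ i, star (d i) * d i = 1) : diagonal d ∈ unitaryGroup ι R := by
  rw [mem_unitaryGroup_iff', star_eq_conjTranspose, diagonal_conjTranspose,
    diagonal_mul_diagonal, ← diagonal_one]
  exact congrArg diagonal (funext hd)

theorem IsLowerTriangular.exists_eq_mul_diagonal_unitary [LinearOrder ι] {𝕜 : Type*}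
    [RCLike 𝕜] {A : Matrix ι ι 𝕜} (hA : A.IsLowerTriangular) (hdiag : ∀ i, A i i ≠ 0) :
    ∃ L E : Matrix ι ι 𝕜, L.IsLowerTriangular ∧ (∀ i, 0 < L i i) ∧
      E ∈ unitaryGroup ι 𝕜 ∧ (∀ i j, i ≠ j → E i j = 0) ∧ A = L * E := by
  set d : ι → 𝕜 := fun i => A i i / ‖A i i‖
  have hd : ∀ i, star (d i) * d i = 1 :=
    fun i => RCLike.star_div_norm_mul_div_norm (hdiag i)
  refine ⟨A * diagonal (star d), diagonal d, hA.mul (blockTriangular_diagonal _), fun i => ?_,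
    diagonal_mem_unitaryGroup hd, fun i j => diagonal_apply_ne _, ?_⟩
  · rw [mul_diagonal, Pi.star_apply, RCLike.mul_star_div_norm, RCLike.ofReal_pos]
    exact norm_pos_iff.mpr (hdiag i)
  · have hdd : (fun i => star d i * d i) = fun _ => 1 := funext hd
    rw [mul_assoc, diagonal_mul_diagonal, hdd, diagonal_one, mul_one]

end Matrix

/-- For a lower triangular input normal pair `(A,B)` with `I − BB*` of full rank,
`A = L E` with `L` the Cholesky factor of `I − BB*` and `E` diagonal unitary. -/
theorem stmt4 {n d : ℕ} (A : Matrix (Fin n) (Fin n) ℂ) (B : Matrix (Fin n) (Fin d) ℂ)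
    (hLT : ∀ i j : Fin n, i < j → A i j = 0)
    (hIN : A * Aᴴ + B * Bᴴ = 1)
    (hrank : (1 - B * Bᴴ).rank = n) :
    ∃ L E : Matrix (Fin n) (Fin n) ℂ,
      (∀ i j : Fin n, i < j → L i j = 0) ∧
      (∀ i : Fin n, 0 < (L i i).re ∧ (L i i).im = 0) ∧
      L * Lᴴ = 1 - B * Bᴴ ∧
      E ∈ Matrix.unitaryGroup (Fin n) ℂ ∧
      (∀ i j : Fin n, i ≠ j → E i j = 0) ∧
      A = L * E := by
  have hAA : A * Aᴴ = 1 - B * Bᴴ := eq_sub_of_add_eq hIN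
  have hA : A.IsLowerTriangular := fun i j hij => hLT i j hij
  have hunit : IsUnit A := isUnit_of_rank_eq_card <| by
    rw [← rank_self_mul_conjTranspose, hAA, hrank, Fintype.card_fin]
  obtain ⟨L, E, hL, hLpos, hE, hEdiag, hLE⟩ :=
    hA.exists_eq_mul_diagonal_unitary (hA.diag_ne_zero_of_isUnit hunit)
  refine ⟨L, E, fun i j hij => hL hij,
    fun i => (Complex.pos_iff.mp (hLpos i)).imp_right Eq.symm, ?_, hE, hEdiag, hLE⟩
  rw [← hAA, hLE, conjTranspose_mul, mul_assoc, ← mul_assoc E, ← star_eq_conjTranspose E,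
    (mem_unitaryGroup_iff ..).mp hE, one_mul]
end

section
/- With M, N as in the bidiagonal construction (M unit lower bidiagonal with subdiagonal γ_k = λ_k* ρ_{k+1}/ρ_k; N lower bidiagonal with diagonal λ_k and subdiagonal μ_k = ρ_{k+1}/ρ_k, where ρ_k = sqrt(1−|λ_k|²) and |λ_k| < 1), set Â = M⁻¹N and B̂ = ρ_1 M⁻¹ e_1. Then Â is lower triangular, ÂÂ* + B̂B̂* = I_n, and the eigenvalues of Â are exactly λ_1,...,λ_n. -/
/-!
With `D = diag ρ` and `S` the down-shift, `M D = D (1 + S Λ̄)` and `N D = D (Λ + S)`. The diagonal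
matrix `W = D⁻²` solves the Stein equation `W - Λ W Λ̄ = 1`, and expanding both products with it
gives `M Mᴴ = N Nᴴ + ρ₁² e₁ e₁ᴴ`. Multiplying by `M⁻¹` on the left and `M⁻ᴴ` on the right turns this
into `Â Âᴴ + B̂ B̂ᴴ = 1`. Finally `Â = M⁻¹ N` is a product of lower triangular matrices with
diagonals `1` and `λ`, so its spectrum is `{λ_k}`.
-/

open Matrix

namespace Matrix

theorem IsLowerTriangular.mul_apply_self {n R : Type*} [Fintype n] [LinearOrder n]
    [NonUnitalNonAssocSemiring R] {A B : Matrix n n R} (hA : A.IsLowerTriangular)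
    (hB : B.IsLowerTriangular) (i : n) : (A * B) i i = A i i * B i i := by
  refine (Finset.sum_eq_single i (fun k _ hki => ?_) (by simp)).trans rfl
  change A i k * B k i = 0
  rcases lt_or_gt_of_ne hki with hk | hk
  · rw [hB hk, mul_zero]
  · rw [hA hk, zero_mul]

theorem IsLowerTriangular.inv {n R : Type*} [Fintype n] [DecidableEq n] [LinearOrder n]
    [CommRing R] {A : Matrix n n R} (hA : A.IsLowerTriangular) : A⁻¹.IsLowerTriangular := by
  by_cases hdet : IsUnit A.det
  · have := A.invertibleOfIsUnitDet hdet
    exact blockTriangular_inv_of_blockTriangular hA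
  · rw [nonsing_inv_apply_not_isUnit A hdet]
    exact blockTriangular_zero

theorem IsLowerTriangular.inv_apply_self_mul {n R : Type*} [Fintype n] [DecidableEq n]
    [LinearOrder n] [CommRing R] {A : Matrix n n R} (hA : A.IsLowerTriangular)
    (hdet : IsUnit A.det) (i : n) : A⁻¹ i i * A i i = 1 := by
  rw [← hA.inv.mul_apply_self hA, nonsing_inv_mul _ hdet, one_apply_eq]

theorem spectrum_eq_range_diag_of_isLowerTriangular {n K : Type*} [Fintype n] [DecidableEq n]
    [LinearOrder n] [Field K] {A : Matrix n n K} (hA : A.IsLowerTriangular) :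
    spectrum K A = Set.range A.diag := by
  ext r
  rw [mem_spectrum_iff_isRoot_charpoly, ← charpoly_transpose,
    charpoly_of_isUpperTriangular Aᵀ hA.transpose]
  simp [Polynomial.eval_prod, Finset.prod_eq_zero_iff, sub_eq_zero, eq_comm (a := r)]

theorem mul_conjTranspose_eq_of_congr {n m R : Type*} [Fintype n] [DecidableEq n] [Fintype m]
    [CommSemiring R] [StarRing R] {M N D W M' N' : Matrix n n R} {E : Matrix n m R}
    (hD : Dᴴ = D) (hDWD : D * W * D = 1) (hM : M * D = D * M') (hN : N * D = D * N')
    (h : M' * W * M'ᴴ = N' * W * N'ᴴ + E * Eᴴ) :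
    M * Mᴴ = N * Nᴴ + (D * E) * (D * E)ᴴ := by
  have hcongr (X Y : Matrix n n R) (hXY : X * D = D * Y) : X * Xᴴ = D * (Y * W * Yᴴ) * D :=
    calc X * Xᴴ = X * (D * W * D) * Xᴴ := by rw [hDWD, Matrix.mul_one]
      _ = (X * D) * W * (X * D)ᴴ := by rw [conjTranspose_mul, hD]; simp only [Matrix.mul_assoc]
      _ = D * (Y * W * Yᴴ) * D := by rw [hXY, conjTranspose_mul, hD]; simp only [Matrix.mul_assoc]
  rw [hcongr M M' hM, hcongr N N' hN, h, conjTranspose_mul, hD]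
  simp only [Matrix.mul_add, Matrix.add_mul, Matrix.mul_assoc]

theorem inv_mul_conjTranspose_add_eq_one {n m R : Type*} [Fintype n] [DecidableEq n] [Fintype m]
    [CommRing R] [StarRing R] {M N : Matrix n n R} {B : Matrix n m R} (hM : IsUnit M.det)
    (h : M * Mᴴ = N * Nᴴ + B * Bᴴ) :
    (M⁻¹ * N) * (M⁻¹ * N)ᴴ + (M⁻¹ * B) * (M⁻¹ * B)ᴴ = 1 := by
  have hMH : IsUnit Mᴴ.det := by rwa [det_conjTranspose, isUnit_star]
  calc (M⁻¹ * N) * (M⁻¹ * N)ᴴ + (M⁻¹ * B) * (M⁻¹ * B)ᴴ = M⁻¹ * (N * Nᴴ + B * Bᴴ) * Mᴴ⁻¹ := by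
        simp only [conjTranspose_mul, conjTranspose_nonsing_inv, Matrix.mul_add, Matrix.add_mul,
          Matrix.mul_assoc]
    _ = 1 := by
      rw [← h, Matrix.mul_assoc, mul_nonsing_inv_cancel_right _ _ hMH, nonsing_inv_mul _ hM]

end Matrix

theorem stein_bidiagonal_identity {R : Type*} [Ring R] [StarRing R] {L W S : R} (hLW : Commute L W)
    (hLW' : Commute (star L) W) (hL : Commute L (star L)) (h : W - L * W * star L = 1) :
    (1 + S * star L) * W * star (1 + S * star L) =
      (L + S) * W * star (L + S) + (1 - S * star S) := by
  have hV : star L * W * L = L * W * star L :=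
    calc star L * W * L = W * (star L * L) := by rw [hLW'.eq, mul_assoc]
      _ = W * (L * star L) := by rw [hL.eq]
      _ = L * W * star L := by rw [← mul_assoc, ← hLW.eq]
  rw [← sub_eq_zero]
  calc _ = (W - L * W * star L - 1) + S * (star L * W - W * star L) + (W * L - L * W) * star S
        + S * (star L * W * L - L * W * star L - (W - L * W * star L - 1)) * star S := by
          simp only [star_add, star_mul, star_one, star_star]; noncomm_ring
    _ = 0 := by rw [h, hV, hLW.eq, hLW'.eq]; simp

def subShift (R : Type*) [Zero R] [One R] (n : ℕ) : Matrix (Fin n) (Fin n) R :=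
  of fun i j => if (i : ℕ) = (j : ℕ) + 1 then 1 else 0

def firstCol (R : Type*) [Zero R] [One R] (n : ℕ) : Matrix (Fin n) (Fin 1) R :=
  of fun i _ => if (i : ℕ) = 0 then 1 else 0

theorem subShift_mul_conjTranspose_add (R : Type*) [Semiring R] [StarRing R] (n : ℕ) :
    subShift R n * (subShift R n)ᴴ + firstCol R n * (firstCol R n)ᴴ = 1 := by
  ext ⟨_ | i, hi⟩ ⟨j, hj⟩
  · simp [mul_apply, subShift, firstCol, one_apply, Fin.ext_iff, eq_comm, apply_ite (star : R → R)]
  · simp only [Matrix.add_apply, mul_apply]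
    rw [Finset.sum_eq_single ⟨i, by omega⟩]
    · simp [subShift, firstCol, one_apply, Fin.ext_iff, eq_comm, apply_ite (star : R → R)]
    · intro k _ hk
      have hik : i ≠ (k : ℕ) := fun h => hk (Fin.ext h.symm)
      simp [subShift, hik]
    · simp

theorem diagonal_mul_firstCol {R : Type*} [Semiring R] {n : ℕ} (hn : 0 < n) (d : Fin n → R) :
    diagonal d * firstCol R n = d ⟨0, hn⟩ • firstCol R n := by
  ext i j
  by_cases hi : (i : ℕ) = 0
  · obtain rfl : i = ⟨0, hn⟩ := Fin.ext hi
    simp [diagonal_mul, firstCol]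
  · simp [diagonal_mul, firstCol, hi]

section Bidiagonal

variable {n : ℕ} (lam : Fin n → ℂ) (ρ : Fin n → ℝ)

noncomputable def bidiagM : Matrix (Fin n) (Fin n) ℂ :=
  of fun i j => if i = j then 1
    else if (i : ℕ) = (j : ℕ) + 1 then (starRingEnd ℂ) (lam j) * ((ρ i : ℂ) / (ρ j : ℂ)) else 0

noncomputable def bidiagN : Matrix (Fin n) (Fin n) ℂ :=
  of fun i j => if i = j then lam i
    else if (i : ℕ) = (j : ℕ) + 1 then ((ρ i : ℂ) / (ρ j : ℂ)) else 0

theorem bidiagM_isLowerTriangular : (bidiagM lam ρ).IsLowerTriangular := by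
  intro i j (hij : i < j)
  have : (i : ℕ) ≠ j + 1 := by omega
  simp [bidiagM, hij.ne, this]

theorem bidiagN_isLowerTriangular : (bidiagN lam ρ).IsLowerTriangular := by
  intro i j (hij : i < j)
  have : (i : ℕ) ≠ j + 1 := by omega
  simp [bidiagN, hij.ne, this]

@[simp]
theorem bidiagM_apply_self (i : Fin n) : bidiagM lam ρ i i = 1 := by
  simp [bidiagM]

@[simp]
theorem bidiagN_apply_self (i : Fin n) : bidiagN lam ρ i i = lam i := by
  simp [bidiagN]

theorem isUnit_det_bidiagM : IsUnit (bidiagM lam ρ).det := by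
  simp [det_of_isLowerTriangular _ (bidiagM_isLowerTriangular lam ρ)]

variable {ρ}

theorem bidiagM_mul_diagonal (hρ : ∀ k, ρ k ≠ 0) :
    bidiagM lam ρ * diagonal (fun k => (ρ k : ℂ)) =
      diagonal (fun k => (ρ k : ℂ)) * (1 + subShift ℂ n * (diagonal lam)ᴴ) := by
  ext i j
  have hρj : (ρ j : ℂ) ≠ 0 := Complex.ofReal_ne_zero.2 (hρ j)
  simp only [bidiagM, subShift, mul_diagonal, diagonal_mul, diagonal_conjTranspose, of_apply,
    Matrix.add_apply, one_apply]
  split_ifs with hij hsub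
  · exact absurd hsub (by omega)
  · simp [hij]
  · simp only [zero_add, one_mul, Pi.star_apply, Complex.star_def]
    field_simp
  · simp

theorem bidiagN_mul_diagonal (hρ : ∀ k, ρ k ≠ 0) :
    bidiagN lam ρ * diagonal (fun k => (ρ k : ℂ)) =
      diagonal (fun k => (ρ k : ℂ)) * (diagonal lam + subShift ℂ n) := by
  ext i j
  have hρj : (ρ j : ℂ) ≠ 0 := Complex.ofReal_ne_zero.2 (hρ j)
  simp only [bidiagN, subShift, mul_diagonal, diagonal_mul, of_apply,
    Matrix.add_apply, diagonal_apply]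
  split_ifs with hij hsub
  · exact absurd hsub (by omega)
  · simp [hij, mul_comm]
  · simp [div_mul_cancel₀ _ hρj]
  · simp

variable {lam}

theorem bidiagM_mul_conjTranspose (hρ : ∀ k, ρ k ≠ 0) (hρsq : ∀ k, ρ k ^ 2 + ‖lam k‖ ^ 2 = 1) :
    bidiagM lam ρ * (bidiagM lam ρ)ᴴ = bidiagN lam ρ * (bidiagN lam ρ)ᴴ +
      (diagonal (fun k => (ρ k : ℂ)) * firstCol ℂ n) *
        (diagonal (fun k => (ρ k : ℂ)) * firstCol ℂ n)ᴴ := by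
  have hρ' (k : Fin n) : (ρ k : ℂ) ≠ 0 := Complex.ofReal_ne_zero.2 (hρ k)
  have hstein : diagonal (fun k => ((ρ k : ℂ) ^ 2)⁻¹) -
      diagonal lam * diagonal (fun k => ((ρ k : ℂ) ^ 2)⁻¹) * star (diagonal lam) = 1 := by
    rw [star_eq_conjTranspose, diagonal_conjTranspose, diagonal_mul_diagonal,
      diagonal_mul_diagonal, diagonal_sub, ← diagonal_one]
    congr 1; funext k
    have hk : (ρ k : ℂ) ^ 2 + lam k * star (lam k) = 1 := by
      rw [Complex.star_def, Complex.mul_conj']; exact_mod_cast hρsq k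
    simp only [Pi.star_apply]
    field_simp [hρ' k]
    linear_combination -hk
  refine mul_conjTranspose_eq_of_congr (W := diagonal fun k => ((ρ k : ℂ) ^ 2)⁻¹) (by simp) ?_
    (bidiagM_mul_diagonal lam hρ)
    (bidiagN_mul_diagonal lam hρ) ?_
  · rw [diagonal_mul_diagonal, diagonal_mul_diagonal, ← diagonal_one]
    congr 1; funext k; field_simp [hρ' k]
  · have hstar : star (diagonal lam) = diagonal (star lam) := diagonal_conjTranspose lam
    have := stein_bidiagonal_identity (S := subShift ℂ n) (commute_diagonal _ _)
      (hstar ▸ commute_diagonal _ _) (hstar ▸ commute_diagonal _ _) hstein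
    rw [eq_sub_of_add_eq' (subShift_mul_conjTranspose_add ℂ n)]
    simpa only [star_eq_conjTranspose] using this

end Bidiagonal

/-- With bidiagonal `M`, `N` built from `|λ_k| < 1`, the pair
`Â = M⁻¹N`, `B̂ = ρ_1 M⁻¹ e_1` is triangular input normal with eigenvalues `λ_1,…,λ_n`. -/
theorem stmt6 {n : ℕ} (hn : 0 < n) (lam : Fin n → ℂ) (hlam : ∀ k, ‖lam k‖ < 1)
    (ρ : Fin n → ℝ) (hρ : ∀ k, ρ k = Real.sqrt (1 - ‖lam k‖ ^ 2))
    (M N : Matrix (Fin n) (Fin n) ℂ)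
    (hM : M = Matrix.of fun i j : Fin n =>
      if i = j then 1
      else if (i : ℕ) = (j : ℕ) + 1 then
        (starRingEnd ℂ) (lam j) * ((ρ i : ℂ) / (ρ j : ℂ))
      else 0)
    (hN : N = Matrix.of fun i j : Fin n =>
      if i = j then lam i
      else if (i : ℕ) = (j : ℕ) + 1 then ((ρ i : ℂ) / (ρ j : ℂ))
      else 0)
    (Ahat : Matrix (Fin n) (Fin n) ℂ) (hAhat : Ahat = M⁻¹ * N)
    (Bhat : Matrix (Fin n) (Fin 1) ℂ)
    (hBhat : Bhat = (ρ ⟨0, hn⟩ : ℂ) •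
      (M⁻¹ * Matrix.of fun (i : Fin n) (_ : Fin 1) => if (i : ℕ) = 0 then (1 : ℂ) else 0)) :
    (∀ i j : Fin n, i < j → Ahat i j = 0) ∧
    Ahat * Ahatᴴ + Bhat * Bhatᴴ = 1 ∧
    spectrum ℂ Ahat = Set.range lam := by
  have hgap (k : Fin n) : 0 < 1 - ‖lam k‖ ^ 2 :=
    sub_pos.2 (pow_lt_one₀ (norm_nonneg _) (hlam k) two_ne_zero)
  have hρne (k : Fin n) : ρ k ≠ 0 := (hρ k ▸ Real.sqrt_pos.2 (hgap k)).ne'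
  have hρsq (k : Fin n) : ρ k ^ 2 + ‖lam k‖ ^ 2 = 1 := by
    rw [hρ k, Real.sq_sqrt (hgap k).le]; ring
  obtain rfl : M = bidiagM lam ρ := hM
  obtain rfl : N = bidiagN lam ρ := hN
  have hMtri := bidiagM_isLowerTriangular lam ρ
  have hNtri := bidiagN_isLowerTriangular lam ρ
  have hdet := isUnit_det_bidiagM lam ρ
  have hAtri : Ahat.IsLowerTriangular := hAhat ▸ hMtri.inv.mul hNtri
  have hAdiag : Ahat.diag = lam := by
    funext i
    have hMinv := hMtri.inv_apply_self_mul hdet i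
    rw [bidiagM_apply_self, mul_one] at hMinv
    rw [hAhat, diag_apply, hMtri.inv.mul_apply_self hNtri, hMinv, one_mul, bidiagN_apply_self]
  refine ⟨fun i j hij => hAtri hij, ?_, ?_⟩
  · have hB : Bhat = (bidiagM lam ρ)⁻¹ * (diagonal (fun k => (ρ k : ℂ)) * firstCol ℂ n) := by
      rw [hBhat, diagonal_mul_firstCol hn, Matrix.mul_smul]; rfl
    rw [hAhat, hB]
    exact inv_mul_conjTranspose_add_eq_one hdet (bidiagM_mul_conjTranspose hρne hρsq)
  · rw [spectrum_eq_range_diag_of_isLowerTriangular hAtri, hAdiag]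
end

section
/- Let λ_1,...,λ_n satisfy |λ_1| ≤ |λ_2| ≤ ... ≤ |λ_n| < 1, and let M be the unit lower bidiagonal matrix with subdiagonal entries λ_k* sqrt((1−|λ_{k+1}|²)/(1−|λ_k|²)). Then every entry of M⁻¹ has modulus < 1 for i > j, and the 2-norm condition number satisfies κ₂(M) ≤ 2n. -/
/-!
The inverse of a unit lower bidiagonal matrix with subdiagonal `d` is explicit: its `(i, j)`
entry for `j ≤ i` is `∏_{j ≤ k < i} (-d k)`. Because `|λ_k| ≤ |λ_{k+1}|`, the square-root factor
is at most `1`, so `|d k| ≤ |λ_k| < 1`; hence the strictly lower entries of `M⁻¹` are nonempty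
products of factors of modulus `< 1`, and all entries of `M⁻¹` have modulus `≤ 1`. The Schur test
`‖A‖₂ ≤ √(‖A‖₁ ‖A‖_∞)` then gives `‖M‖₂ ≤ 2` (at most two entries of modulus `≤ 1` per row and
column) and `‖M⁻¹‖₂ ≤ n`.
-/

open Matrix Finset
open scoped Matrix.Norms.L2Operator

theorem Fintype.sum_boole_le_one_of_subsingleton {ι : Type*} [Fintype ι] {p : ι → Prop}
    [DecidablePred p] (hp : {x | p x}.Subsingleton) : ∑ x, (if p x then (1 : ℝ) else 0) ≤ 1 := by
  rw [sum_boole]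
  exact_mod_cast card_le_one.2 fun a ha b hb => hp (mem_filter.1 ha).2 (mem_filter.1 hb).2

namespace Matrix

section SchurTest

variable {𝕜 m n : Type*} [RCLike 𝕜] [Fintype n]

theorem norm_mulVec_apply_sq_le (A : Matrix m n 𝕜) (x : n → 𝕜) (i : m) :
    ‖(A *ᵥ x) i‖ ^ 2 ≤ (∑ j, ‖A i j‖) * ∑ j, ‖A i j‖ * ‖x j‖ ^ 2 := by
  have h : ‖(A *ᵥ x) i‖ ≤ ∑ j, ‖A i j‖ * ‖x j‖ :=
    (norm_sum_le _ _).trans (sum_le_sum fun j _ => norm_mul_le _ _)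
  refine (pow_le_pow_left₀ (norm_nonneg _) h 2).trans ?_
  exact sum_sq_le_sum_mul_sum_of_sq_le_mul _ (fun j _ => norm_nonneg _)
    (fun j _ => by positivity) (fun j _ => by ring_nf; rfl)

theorem l2_opNorm_le_sqrt_mul [Fintype m] [DecidableEq n] (A : Matrix m n 𝕜) {r c : ℝ}
    (hr : 0 ≤ r) (hrow : ∀ i, ∑ j, ‖A i j‖ ≤ r) (hcol : ∀ j, ∑ i, ‖A i j‖ ≤ c) :
    ‖A‖ ≤ √(r * c) := by
  rw [l2_opNorm_def]
  refine ContinuousLinearMap.opNorm_le_bound _ (Real.sqrt_nonneg _) fun x => ?_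
  show ‖WithLp.toLp 2 (A *ᵥ x.ofLp)‖ ≤ _
  rw [← Real.sqrt_sq (norm_nonneg x), ← Real.sqrt_mul' _ (sq_nonneg _)]
  refine Real.le_sqrt_of_sq_le ?_
  rw [EuclideanSpace.norm_sq_eq, EuclideanSpace.norm_sq_eq]
  calc ∑ i, ‖(A *ᵥ x.ofLp) i‖ ^ 2
      ≤ ∑ i, r * ∑ j, ‖A i j‖ * ‖x j‖ ^ 2 :=
        sum_le_sum fun i _ => (A.norm_mulVec_apply_sq_le _ i).trans <|
          mul_le_mul_of_nonneg_right (hrow i) (by positivity)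
    _ = r * ∑ j, (∑ i, ‖A i j‖) * ‖x j‖ ^ 2 := by
        rw [← mul_sum, sum_comm]; simp_rw [sum_mul]
    _ ≤ r * ∑ j, c * ‖x j‖ ^ 2 := by gcongr; exact hcol _
    _ = r * c * ∑ j, ‖x j‖ ^ 2 := by rw [← mul_sum, mul_assoc]

theorem l2_opNorm_le_card_of_norm_apply_le_one [DecidableEq n] {A : Matrix n n 𝕜}
    (hA : ∀ i j, ‖A i j‖ ≤ 1) : ‖A‖ ≤ Fintype.card n := by
  have hsum : ∀ f : n → ℝ, (∀ j, f j ≤ 1) → ∑ j, f j ≤ Fintype.card n := fun f hf => by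
    simpa using sum_le_sum fun j (_ : j ∈ univ) => hf j
  simpa using A.l2_opNorm_le_sqrt_mul (Nat.cast_nonneg _) (fun i => hsum _ (hA i))
    (fun j => hsum _ (hA · j))

end SchurTest

section Bidiagonal

variable {R : Type*} [CommRing R]

def unitLowerBidiagonal (n : ℕ) (d : ℕ → R) : Matrix (Fin n) (Fin n) R :=
  of fun i j => if i = j then 1 else if (i : ℕ) = j + 1 then d j else 0

def bidiagonalInvEntry (d : ℕ → R) (i j : ℕ) : R :=
  if j ≤ i then ∏ k ∈ Ico j i, -d k else 0

def unitLowerBidiagonalInv (n : ℕ) (d : ℕ → R) : Matrix (Fin n) (Fin n) R :=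
  of fun i j => bidiagonalInvEntry d i j

theorem bidiagonalInvEntry_zero_left (d : ℕ → R) (j : ℕ) :
    bidiagonalInvEntry d 0 j = if j = 0 then 1 else 0 := by
  simp [bidiagonalInvEntry]

theorem bidiagonalInvEntry_succ_left (d : ℕ → R) (i j : ℕ) :
    bidiagonalInvEntry d (i + 1) j =
      -d i * bidiagonalInvEntry d i j + if j = i + 1 then 1 else 0 := by
  unfold bidiagonalInvEntry
  rcases lt_trichotomy j (i + 1) with h | rfl | h
  · rw [if_pos h.le, if_pos (Nat.lt_succ_iff.mp h), prod_Ico_succ_top (Nat.lt_succ_iff.mp h),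
      if_neg h.ne]
    ring
  · simp
  · rw [if_neg (by omega), if_neg (by omega), if_neg h.ne']
    ring

theorem unitLowerBidiagonal_mul_unitLowerBidiagonalInv (n : ℕ) (d : ℕ → R) :
    unitLowerBidiagonal n d * unitLowerBidiagonalInv n d = 1 := by
  ext i j
  set e := bidiagonalInvEntry d
  have hsummand : ∀ l : Fin n, unitLowerBidiagonal n d i l * unitLowerBidiagonalInv n d l j =
      (if (l : ℕ) = i then e l j else 0) + (if (l : ℕ) + 1 = i then d l * e l j else 0) := by
    intro l
    simp only [unitLowerBidiagonal, unitLowerBidiagonalInv, of_apply, Fin.ext_iff]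
    split_ifs <;> first | omega | ring
  simp only [mul_apply, hsummand, sum_add_distrib,
    Fin.sum_univ_eq_sum_range (fun l => if l = (i : ℕ) then e l j else 0),
    Fin.sum_univ_eq_sum_range (fun l => if l + 1 = (i : ℕ) then d l * e l j else 0),
    sum_ite_eq', mem_range, i.isLt, if_true, one_apply, Fin.ext_iff]
  obtain ⟨_ | m, hi⟩ := i
  · simp [e, bidiagonalInvEntry_zero_left, eq_comm]
  · simp only [add_left_inj, sum_ite_eq', mem_range, show m < n by omega, if_true, e,
      bidiagonalInvEntry_succ_left]
    split_ifs <;> first | omega | ring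

theorem inv_unitLowerBidiagonal (n : ℕ) (d : ℕ → R) :
    (unitLowerBidiagonal n d)⁻¹ = unitLowerBidiagonalInv n d :=
  inv_eq_right_inv (unitLowerBidiagonal_mul_unitLowerBidiagonalInv n d)

end Bidiagonal

section BidiagonalNorms

theorem norm_unitLowerBidiagonalInv_apply_le_one {𝕜 : Type*} [NormedField 𝕜] {n : ℕ}
    {d : ℕ → 𝕜} (hd : ∀ k, k + 1 < n → ‖d k‖ ≤ 1) (i j : Fin n) :
    ‖unitLowerBidiagonalInv n d i j‖ ≤ 1 := by
  simp only [unitLowerBidiagonalInv, of_apply, bidiagonalInvEntry]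
  split_ifs
  · rw [norm_prod]
    exact prod_le_one (fun _ _ => norm_nonneg _) fun k hk => by
      rw [norm_neg]; exact hd k (by grind)
  · simp

theorem norm_unitLowerBidiagonalInv_apply_lt_one {𝕜 : Type*} [NormedField 𝕜] {n : ℕ}
    {d : ℕ → 𝕜} (hd : ∀ k, k + 1 < n → ‖d k‖ < 1) {i j : Fin n} (hji : j < i) :
    ‖unitLowerBidiagonalInv n d i j‖ < 1 := by
  have hji' : (j : ℕ) < i := hji
  simp only [unitLowerBidiagonalInv, of_apply, bidiagonalInvEntry, if_pos hji'.le,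
    prod_eq_prod_Ico_succ_bot hji', norm_mul, norm_prod, norm_neg]
  exact mul_lt_one_of_nonneg_of_lt_one_left (norm_nonneg _) (hd j (by omega))
    (prod_le_one (fun _ _ => norm_nonneg _) fun k hk => (hd k (by grind)).le)

variable {𝕜 : Type*} [RCLike 𝕜] {n : ℕ} {d : ℕ → 𝕜}

theorem norm_unitLowerBidiagonal_apply_le (hd : ∀ k, k + 1 < n → ‖d k‖ ≤ 1) (i j : Fin n) :
    ‖unitLowerBidiagonal n d i j‖ ≤
      (if i = j then 1 else 0) + if (i : ℕ) = j + 1 then 1 else 0 := by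
  simp only [unitLowerBidiagonal, of_apply]
  by_cases h₁ : i = j
  · simp [h₁]
  by_cases h₂ : (i : ℕ) = j + 1
  · simpa [h₁, h₂] using hd j (by omega)
  · simp [h₁, h₂]

theorem l2_opNorm_unitLowerBidiagonal_le (hd : ∀ k, k + 1 < n → ‖d k‖ ≤ 1) :
    ‖unitLowerBidiagonal n d‖ ≤ 2 := by
  have hrow : ∀ i, ∑ j, ‖unitLowerBidiagonal n d i j‖ ≤ 2 := fun i => by
    refine (sum_le_sum fun j _ => norm_unitLowerBidiagonal_apply_le hd i j).trans ?_
    rw [sum_add_distrib, sum_ite_eq, if_pos (mem_univ _), one_add_one_eq_two.symm]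
    gcongr
    exact Fintype.sum_boole_le_one_of_subsingleton fun a ha b hb => Fin.ext (by simp_all)
  have hcol : ∀ j, ∑ i, ‖unitLowerBidiagonal n d i j‖ ≤ 2 := fun j => by
    refine (sum_le_sum fun i _ => norm_unitLowerBidiagonal_apply_le hd i j).trans ?_
    rw [sum_add_distrib, sum_ite_eq', if_pos (mem_univ _), one_add_one_eq_two.symm]
    gcongr
    exact Fintype.sum_boole_le_one_of_subsingleton fun a ha b hb => Fin.ext (by simp_all)
  exact (l2_opNorm_le_sqrt_mul _ zero_le_two hrow hcol).trans_eq (Real.sqrt_mul_self zero_le_two)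

theorem l2_opNorm_unitLowerBidiagonalInv_le (hd : ∀ k, k + 1 < n → ‖d k‖ ≤ 1) :
    ‖unitLowerBidiagonalInv n d‖ ≤ n := by
  simpa using l2_opNorm_le_card_of_norm_apply_le_one (norm_unitLowerBidiagonalInv_apply_le_one hd)

end BidiagonalNorms

end Matrix

open ComplexConjugate in
theorem norm_conj_mul_sqrt_div_le {z w : ℂ} (hzw : ‖z‖ ≤ ‖w‖) (hw : ‖w‖ < 1) :
    ‖conj z * (√((1 - ‖w‖ ^ 2) / (1 - ‖z‖ ^ 2)) : ℂ)‖ ≤ ‖z‖ := by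
  have hz : ‖z‖ < 1 := hzw.trans_lt hw
  have hratio : (1 - ‖w‖ ^ 2) / (1 - ‖z‖ ^ 2) ≤ 1 :=
    div_le_one_of_le₀ (by gcongr) (by nlinarith [norm_nonneg z])
  rw [norm_mul, Complex.norm_conj, Complex.norm_real, Real.norm_of_nonneg (Real.sqrt_nonneg _)]
  exact mul_le_of_le_one_right (norm_nonneg _) (Real.sqrt_le_one.mpr hratio)

/-- If the eigenvalue magnitudes are ascending, every strictly lower entry of `M⁻¹` has
modulus `< 1` and the 2-norm condition number satisfies `κ₂(M) ≤ 2n`. -/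
theorem stmt8 {n : ℕ} (lam : Fin n → ℂ) (hlam : ∀ k, ‖lam k‖ < 1)
    (hmono : Monotone fun k : Fin n => ‖lam k‖)
    (M : Matrix (Fin n) (Fin n) ℂ)
    (hM : M = Matrix.of fun i j : Fin n =>
      if i = j then 1
      else if (i : ℕ) = (j : ℕ) + 1 then
        (starRingEnd ℂ) (lam j) *
          (Real.sqrt ((1 - ‖lam i‖ ^ 2) / (1 - ‖lam j‖ ^ 2)) : ℂ)
      else 0) :
    (∀ i j : Fin n, j < i → ‖M⁻¹ i j‖ < 1) ∧
    ‖M‖ * ‖M⁻¹‖ ≤ 2 * n := by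
  -- `μ` extends `lam` to `ℕ`; its values beyond `n - 1` never enter `M`.
  set μ : ℕ → ℂ := fun k => if h : k < n then lam ⟨k, h⟩ else 0
  set d : ℕ → ℂ := fun k =>
    starRingEnd ℂ (μ k) * (√((1 - ‖μ (k + 1)‖ ^ 2) / (1 - ‖μ k‖ ^ 2)) : ℂ)
  have hμ : ∀ k (hk : k < n), μ k = lam ⟨k, hk⟩ := fun k hk => dif_pos hk
  have hMd : M = unitLowerBidiagonal n d := by
    subst hM
    ext i j
    simp only [unitLowerBidiagonal, of_apply]
    split_ifs with _ hij
    · rfl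
    · simp only [d]
      rw [hμ j j.isLt, ← hij, hμ i i.isLt]
    · rfl
  have hd : ∀ k, k + 1 < n → ‖d k‖ < 1 := fun k hk => by
    simp only [d]
    rw [hμ k (by omega), hμ (k + 1) hk]
    exact (norm_conj_mul_sqrt_div_le (hmono (Fin.mk_le_mk.2 (Nat.le_succ k))) (hlam _)).trans_lt
      (hlam _)
  rw [hMd, inv_unitLowerBidiagonal]
  refine ⟨fun i j hji => norm_unitLowerBidiagonalInv_apply_lt_one hd hji, ?_⟩
  exact mul_le_mul (l2_opNorm_unitLowerBidiagonal_le fun k hk => (hd k hk).le)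
    (l2_opNorm_unitLowerBidiagonalInv_le fun k hk => (hd k hk).le) (norm_nonneg _) zero_le_two
end

section
/- Let λ_1,...,λ_n be distinct complex numbers with |λ_k| < 1, and let A = M⁻¹N be the bidiagonal-fraction triangular input normal state matrix built from them. Then the matrix V with V_{kk} = 1, V_{jk} = 0 for j < k, and for j > k: V_{jk} = [sqrt(1−|λ_j|²) sqrt(1−|λ_k|²) / (λ_k − λ_j)] · ∏_{k < j' < j} (1 − λ_k λ_{j'}*)/(λ_k − λ_{j'}), satisfies AV = VΛ where Λ = diag(λ_1,...,λ_n). -/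
/-!
Since `M` is unit lower triangular it is invertible, so `M⁻¹ N V = V Λ` is equivalent to
`N V = M V Λ`. Comparing row `i = p + 1` of both sides, this says that each column of `V`
satisfies `(λ_i - λ_k) V_ik = (ρ_i / ρ_p) (λ_k λ̄_p - 1) V_pk`; for `k < p` this is the step
from `∏_{k<j'<p}` to `∏_{k<j'<i}` in the product formula, and for `k = p` it is
`ρ_p² = 1 - |λ_p|²`. Row `0` only asks that the first row of `V` vanish off the diagonal.
-/

open Matrix Finset ComplexConjugate

theorem ofReal_sqrt_one_sub_norm_sq_mul_self {z : ℂ} (hz : ‖z‖ ≤ 1) :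
    (√(1 - ‖z‖ ^ 2) : ℂ) * √(1 - ‖z‖ ^ 2) = 1 - z * conj z := by
  rw [← Complex.ofReal_mul, Real.mul_self_sqrt (by nlinarith [norm_nonneg z]), Complex.mul_conj']
  push_cast
  ring

section LowerBidiagonal

variable {n : ℕ} {R : Type*}

def lowerBidiagonal [Zero R] (d : Fin n → R) (s : Fin n → Fin n → R) : Matrix (Fin n) (Fin n) R :=
  of fun i j => if i = j then d i else if (i : ℕ) = (j : ℕ) + 1 then s i j else 0

theorem lowerBidiagonal_isLowerTriangular [Zero R] (d : Fin n → R) (s : Fin n → Fin n → R) :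
    (lowerBidiagonal d s).IsLowerTriangular := by
  intro i j (hij : i < j)
  simp only [lowerBidiagonal, of_apply]
  rw [if_neg hij.ne, if_neg (by omega)]

theorem det_lowerBidiagonal [CommRing R] (d : Fin n → R) (s : Fin n → Fin n → R) :
    (lowerBidiagonal d s).det = ∏ i, d i := by
  rw [det_of_isLowerTriangular _ (lowerBidiagonal_isLowerTriangular d s)]
  simp [lowerBidiagonal]

variable {m : Type*} [NonUnitalNonAssocSemiring R]

theorem lowerBidiagonal_mul_apply_of_val_eq_zero (d : Fin n → R) (s : Fin n → Fin n → R)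
    (B : Matrix (Fin n) m R) {i : Fin n} (hi : (i : ℕ) = 0) (k : m) :
    (lowerBidiagonal d s * B) i k = d i * B i k := by
  rw [mul_apply, Fintype.sum_eq_single i]
  · simp [lowerBidiagonal]
  · intro j hj
    simp [lowerBidiagonal, Ne.symm hj, hi]

theorem lowerBidiagonal_mul_apply_of_val_eq_succ (d : Fin n → R) (s : Fin n → Fin n → R)
    (B : Matrix (Fin n) m R) {i j : Fin n} (hij : (i : ℕ) = j + 1) (k : m) :
    (lowerBidiagonal d s * B) i k = d i * B i k + s i j * B j k := by
  have hji : i ≠ j := Fin.ne_of_val_ne (by omega)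
  rw [mul_apply, Fintype.sum_eq_add i j hji]
  · simp [lowerBidiagonal, hji, hij]
  · rintro l ⟨hli, hlj⟩
    have : (i : ℕ) ≠ l + 1 := fun h => hlj (Fin.ext (by omega))
    simp [lowerBidiagonal, Ne.symm hli, this]

end LowerBidiagonal

section Eigenvectors

variable {n : ℕ} (lam ρ : Fin n → ℂ)

/-- The matrix `V` of the triangular input normal form, with `ρ k` standing for `√(1 - |λ_k|²)`. -/
noncomputable def tinEigenvectorMatrix : Matrix (Fin n) (Fin n) ℂ :=
  of fun j k =>
    if j = k then 1
    else if j < k then 0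
    else ρ j * ρ k / (lam k - lam j) *
      ∏ j' ∈ Ioo k j, (1 - lam k * conj (lam j')) / (lam k - lam j')

theorem tinEigenvectorMatrix_apply_of_lt {j k : Fin n} (h : j < k) :
    tinEigenvectorMatrix lam ρ j k = 0 := by
  simp [tinEigenvectorMatrix, h.ne, h]

variable {lam ρ}

theorem sub_mul_tinEigenvectorMatrix_apply (hlam : Function.Injective lam)
    (hρ : ∀ k, ρ k ≠ 0) (hρ_sq : ∀ k, ρ k * ρ k = 1 - lam k * conj (lam k))
    {i p : Fin n} (hip : (i : ℕ) = p + 1) (k : Fin n) :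
    (lam i - lam k) * tinEigenvectorMatrix lam ρ i k =
      ρ i / ρ p * (lam k * conj (lam p) - 1) * tinEigenvectorMatrix lam ρ p k := by
  have hpi : p < i := Fin.lt_def.2 (by omega)
  have hsub : ∀ {a b : Fin n}, a ≠ b → lam a - lam b ≠ 0 :=
    fun h => sub_ne_zero.2 (hlam.ne h)
  rcases lt_trichotomy i k with hik | rfl | hki
  · simp [tinEigenvectorMatrix_apply_of_lt _ _ hik,
      tinEigenvectorMatrix_apply_of_lt _ _ (hpi.trans hik)]
  · simp [tinEigenvectorMatrix_apply_of_lt _ _ hpi]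
  have hkp : k ≤ p := Fin.le_def.2 (by rw [Fin.lt_def] at hki; omega)
  simp only [tinEigenvectorMatrix, of_apply, if_neg hki.ne', if_neg (not_lt.2 hki.le)]
  rcases hkp.eq_or_lt with rfl | hkp
  · have hIoo : Ioo k i = ∅ := by
      ext x; simp only [mem_Ioo, Fin.lt_def, notMem_empty, iff_false]; omega
    rw [if_pos rfl, hIoo, prod_empty]
    field_simp [hρ k, hsub hki.ne]
    linear_combination ρ i * (lam i - lam k) * hρ_sq k
  · have hIoo : Ioo k i = insert p (Ioo k p) := by
      ext x; simp only [mem_Ioo, mem_insert, Fin.lt_def, Fin.ext_iff]; omega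
    rw [if_neg hkp.ne', if_neg (not_lt.2 hkp.le), hIoo, prod_insert (by simp)]
    field_simp [hρ p, hsub hki.ne, hsub hkp.ne]
    ring

theorem lowerBidiagonal_mul_tinEigenvectorMatrix (hlam : Function.Injective lam)
    (hρ : ∀ k, ρ k ≠ 0) (hρ_sq : ∀ k, ρ k * ρ k = 1 - lam k * conj (lam k)) :
    lowerBidiagonal lam (fun i j => ρ i / ρ j) * tinEigenvectorMatrix lam ρ =
      lowerBidiagonal (fun _ => 1) (fun i j => conj (lam j) * (ρ i / ρ j)) *
        (tinEigenvectorMatrix lam ρ * diagonal lam) := by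
  ext i k
  obtain hi | ⟨p, hip⟩ : (i : ℕ) = 0 ∨ ∃ p : Fin n, (i : ℕ) = p + 1 :=
    (Nat.eq_zero_or_pos i).imp_right fun hi => ⟨⟨i - 1, by omega⟩, (Nat.sub_add_cancel hi).symm⟩
  · rw [lowerBidiagonal_mul_apply_of_val_eq_zero _ _ _ hi,
      lowerBidiagonal_mul_apply_of_val_eq_zero _ _ _ hi, mul_diagonal]
    rcases eq_or_ne i k with rfl | hik
    · ring
    · have hik : i < k := (Fin.le_def.2 (by omega)).lt_of_ne hik
      simp [tinEigenvectorMatrix_apply_of_lt _ _ hik]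
  · rw [lowerBidiagonal_mul_apply_of_val_eq_succ _ _ _ hip,
      lowerBidiagonal_mul_apply_of_val_eq_succ _ _ _ hip, mul_diagonal, mul_diagonal]
    linear_combination sub_mul_tinEigenvectorMatrix_apply hlam hρ hρ_sq hip k

end Eigenvectors

/-- The explicit lower triangular matrix `V` of eigenvectors satisfies `AV = VΛ`
for the bidiagonal-fraction TIN state matrix `A = M⁻¹N` built from distinct `|λ_k| < 1`. -/
theorem stmt9 {n : ℕ} (lam : Fin n → ℂ) (hlam : ∀ k, ‖lam k‖ < 1)
    (hdistinct : Function.Injective lam)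
    (ρ : Fin n → ℝ) (hρ : ∀ k, ρ k = Real.sqrt (1 - ‖lam k‖ ^ 2))
    (M N V : Matrix (Fin n) (Fin n) ℂ)
    (hM : M = Matrix.of fun i j : Fin n =>
      if i = j then 1
      else if (i : ℕ) = (j : ℕ) + 1 then
        (starRingEnd ℂ) (lam j) * ((ρ i : ℂ) / (ρ j : ℂ))
      else 0)
    (hN : N = Matrix.of fun i j : Fin n =>
      if i = j then lam i
      else if (i : ℕ) = (j : ℕ) + 1 then ((ρ i : ℂ) / (ρ j : ℂ))
      else 0)
    (hV : V = Matrix.of fun j k : Fin n =>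
      if j = k then 1
      else if j < k then 0
      else ((Real.sqrt (1 - ‖lam j‖ ^ 2) * Real.sqrt (1 - ‖lam k‖ ^ 2) : ℝ) : ℂ) /
          (lam k - lam j) *
        ∏ j' ∈ Finset.Ioo k j,
          (1 - lam k * (starRingEnd ℂ) (lam j')) / (lam k - lam j')) :
    (M⁻¹ * N) * V = V * Matrix.diagonal lam := by
  have hρ_ne : ∀ k, (ρ k : ℂ) ≠ 0 := fun k => by
    rw [hρ, Complex.ofReal_ne_zero, Real.sqrt_ne_zero']
    nlinarith [hlam k, norm_nonneg (lam k)]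
  have hρ_sq : ∀ k, (ρ k : ℂ) * ρ k = 1 - lam k * conj (lam k) := fun k => by
    rw [hρ]; exact ofReal_sqrt_one_sub_norm_sq_mul_self (hlam k).le
  have hV' : V = tinEigenvectorMatrix lam (fun k => (ρ k : ℂ)) := by
    rw [hV]; simp only [← hρ, Complex.ofReal_mul]; rfl
  have hN' : N = lowerBidiagonal lam (fun i j => (ρ i : ℂ) / ρ j) := hN
  have hM' : M = lowerBidiagonal (fun _ => 1) (fun i j => conj (lam j) * ((ρ i : ℂ) / ρ j)) := hM
  have hM_det : IsUnit M.det := by simp [hM', det_lowerBidiagonal]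
  rw [mul_assoc, hN', hV', lowerBidiagonal_mul_tinEigenvectorMatrix hdistinct hρ_ne hρ_sq, ← hM',
    nonsing_inv_mul_cancel_left M _ hM_det]
end

section
/- Let A be an n×n lower triangular complex matrix, B an n×d matrix, and D a positive definite diagonal matrix with D − ADA* = BB*. If the concatenated n×(n+d) matrix (B | A) has nonvanishing leading principal k×k minors for all k < n, then there exist unique matrices M, N, B̂ such that M is lower triangular with lower bandwidth d and unit diagonal, N is lower triangular with lower bandwidth d, B̂ is n×d with B̂_{jk} = 0 for j > k, and B = M⁻¹B̂, A = M⁻¹N. -/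
/-!
Since the leading minors of `(B | A)` do not vanish, there is exactly one unit lower triangular
`M` that row-reduces `(B | A)` to upper echelon form; echelon form says precisely that
`B̂ = M B` is upper triangular and that `N = M A` has lower bandwidth `d`. The band structure of
`M` itself comes from the Stein equation: `M D Mᴴ = B̂ B̂ᴴ + N D Nᴴ` has lower bandwidth `d`,
and multiplying it on the right by the upper triangular matrix `(D Mᴴ)⁻¹` gives back `M`.
-/

open Matrix

theorem Fin.sum_castLE_eq_sum_Iio {M : Type*} [AddCommMonoid M] {n : ℕ} (i : Fin n)
    (f : Fin n → M) :
    ∑ j : Fin i, f (j.castLE i.2.le) = ∑ j ∈ Finset.Iio i, f j := by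
  have : Finset.Iio i = Finset.univ.map (Fin.castLEEmb i.2.le) := by
    ext j
    simp only [Finset.mem_Iio, Finset.mem_map, Finset.mem_univ, Fin.castLEEmb_apply, true_and]
    exact ⟨fun h => ⟨⟨j, h⟩, rfl⟩, fun ⟨a, ha⟩ => ha ▸ a.2⟩
  rw [this, Finset.sum_map]
  rfl

namespace Matrix

variable {R : Type*} {l m n d : ℕ}

def HasLowerBandwidth [Zero R] (M : Matrix (Fin l) (Fin m) R) (d : ℕ) : Prop :=
  ∀ (i : Fin l) (j : Fin m), (j : ℕ) + d < i → M i j = 0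

theorem forall_lt_or_add_lt_imp_eq_zero_iff [Zero R] (M : Matrix (Fin n) (Fin n) R) :
    (∀ i j : Fin n, ((i : ℕ) < j ∨ (j : ℕ) + d < i) → M i j = 0) ↔
      M.IsLowerTriangular ∧ M.HasLowerBandwidth d :=
  ⟨fun h => ⟨fun i j hij => h i j (.inl hij), fun i j hij => h i j (.inr hij)⟩,
    fun h i j hij => hij.elim (fun hij => h.1 hij) (h.2 i j)⟩

theorem IsLowerTriangular.conjTranspose [AddMonoid R] [StarAddMonoid R]
    {M : Matrix (Fin n) (Fin n) R} (hM : M.IsLowerTriangular) : Mᴴ.IsUpperTriangular :=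
  fun i j hij => by simp [conjTranspose_apply, hM hij]

theorem isUnit_det_of_unitLowerTriangular [CommRing R] {L : Matrix (Fin n) (Fin n) R}
    (hL : L.IsLowerTriangular) (hL1 : ∀ i, L i i = 1) : IsUnit L.det := by
  simp [det_of_isLowerTriangular L hL, hL1]

theorem HasLowerBandwidth.add [AddZeroClass R] {P Q : Matrix (Fin l) (Fin m) R}
    (hP : P.HasLowerBandwidth d) (hQ : Q.HasLowerBandwidth d) : (P + Q).HasLowerBandwidth d :=
  fun i j h => by rw [add_apply, hP i j h, hQ i j h, add_zero]

theorem HasLowerBandwidth.mul_isUpperTriangular [NonUnitalNonAssocSemiring R]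
    {P : Matrix (Fin l) (Fin n) R} {U : Matrix (Fin n) (Fin n) R} (hP : P.HasLowerBandwidth d)
    (hU : U.IsUpperTriangular) : (P * U).HasLowerBandwidth d := fun i j h => by
  rw [mul_apply]
  refine Finset.sum_eq_zero fun k _ => ?_
  rcases le_or_gt k j with hk | hk
  · rw [hP i k (by omega), zero_mul]
  · rw [hU hk, mul_zero]

/-- A matrix with only `d` columns and zero entries below the diagonal vanishes from row `d` on. -/
theorem HasLowerBandwidth.mul_of_width [NonUnitalNonAssocSemiring R]
    {P : Matrix (Fin l) (Fin d) R} (hP : P.HasLowerBandwidth 0) (Q : Matrix (Fin d) (Fin m) R) :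
    (P * Q).HasLowerBandwidth d := fun i j h => by
  rw [mul_apply]
  exact Finset.sum_eq_zero fun k _ => by rw [hP i k (by omega), zero_mul]

theorem HasLowerBandwidth.of_mul_isUpperTriangular [CommRing R] {P U : Matrix (Fin n) (Fin n) R}
    (h : (P * U).HasLowerBandwidth d) (hU : U.IsUpperTriangular) (hdet : IsUnit U.det) :
    P.HasLowerBandwidth d := by
  have := U.invertibleOfIsUnitDet hdet
  simpa [Matrix.mul_assoc] using h.mul_isUpperTriangular (blockTriangular_inv_of_blockTriangular hU)

theorem HasLowerBandwidth.of_mul_mul_conjTranspose [CommRing R] [StarRing R]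
    {L D : Matrix (Fin n) (Fin n) R} (h : (L * D * Lᴴ).HasLowerBandwidth d)
    (hL : L.IsLowerTriangular) (hLdet : IsUnit L.det) (hD : D.IsUpperTriangular)
    (hDdet : IsUnit D.det) : L.HasLowerBandwidth d := by
  refine .of_mul_isUpperTriangular (U := D * Lᴴ) ?_ (hD.mul (IsLowerTriangular.conjTranspose hL)) ?_
  · rwa [← Matrix.mul_assoc]
  · rw [det_mul, det_conjTranspose]
    exact hDdet.mul hLdet.star

theorem mul_apply_of_unitLowerTriangular [NonAssocSemiring R] {L : Matrix (Fin n) (Fin n) R}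
    (hL : L.IsLowerTriangular) (hL1 : ∀ i, L i i = 1) (X : Matrix (Fin n) (Fin m) R) (i : Fin n)
    (c : Fin m) :
    (L * X) i c =
      ((fun j : Fin i => L i (j.castLE i.2.le)) ᵥ* X.submatrix (Fin.castLE i.2.le) id) c
        + X i c := by
  have hsupp : ∀ j ∉ Finset.Iic i, L i j * X j c = 0 := fun j hj => by
    rw [hL (by simpa using hj), zero_mul]
  rw [mul_apply, ← Finset.sum_subset (Finset.subset_univ _) fun j _ hj => hsupp j hj,
    ← Finset.sum_Iio_add_eq_sum_Iic, hL1, one_mul, ← Fin.sum_castLE_eq_sum_Iio]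
  rfl

theorem isUpperTriangular_mul_iff_vecMul [Ring R] {L X : Matrix (Fin n) (Fin n) R}
    (hL : L.IsLowerTriangular) (hL1 : ∀ i, L i i = 1) :
    (L * X).IsUpperTriangular ↔ ∀ i : Fin n,
      (fun j : Fin i => L i (j.castLE i.2.le)) ᵥ*
        X.submatrix (Fin.castLE i.2.le) (Fin.castLE i.2.le) = -fun c => X i (c.castLE i.2.le) := by
  simp only [IsUpperTriangular, BlockTriangular, id, mul_apply_of_unitLowerTriangular hL hL1]
  refine ⟨fun h i => funext fun c => eq_neg_of_add_eq_zero_left (h (Fin.lt_def.2 c.2)),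
    fun h i c hci => ?_⟩
  exact eq_neg_iff_add_eq_zero.1 (congrFun (h i) ⟨c, hci⟩)

theorem existsUnique_unitLowerTriangular_mul_isUpperTriangular {K : Type*} [Field K]
    (X : Matrix (Fin n) (Fin n) K)
    (hX : ∀ k (hk : k < n), (X.submatrix (Fin.castLE hk.le) (Fin.castLE hk.le)).det ≠ 0) :
    ∃! L : Matrix (Fin n) (Fin n) K,
      L.IsLowerTriangular ∧ (∀ i, L i i = 1) ∧ (L * X).IsUpperTriangular := by
  have hunit (i : Fin n) : IsUnit (X.submatrix (Fin.castLE i.2.le) (Fin.castLE i.2.le)) :=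
    (isUnit_iff_isUnit_det _).2 (hX i i.2).isUnit
  choose r hr using fun i : Fin n =>
    vecMul_surjective_iff_isUnit.2 (hunit i) (-fun c => X i (c.castLE i.2.le))
  let L₀ : Matrix (Fin n) (Fin n) K :=
    of fun i j => if h : j < i then r i ⟨j, h⟩ else if j = i then 1 else 0
  have hL₀ : L₀.IsLowerTriangular := fun i j (hij : i < j) => by
    simp only [L₀, of_apply, dif_neg hij.not_gt, if_neg hij.ne']
  have hL₀1 (i : Fin n) : L₀ i i = 1 := by simp [L₀]
  refine ⟨L₀, ⟨hL₀, hL₀1, (isUpperTriangular_mul_iff_vecMul hL₀ hL₀1).2 fun i => ?_⟩, ?_⟩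
  · convert hr i using 2
    funext j
    simp only [L₀, of_apply]
    rw [dif_pos (show j.castLE i.2.le < i from j.2)]
    rfl
  · rintro L ⟨hL, hL1, hLX⟩
    rw [isUpperTriangular_mul_iff_vecMul hL hL1] at hLX
    ext i j
    rcases lt_trichotomy j i with hji | rfl | hij
    · have := vecMul_injective_of_isUnit (hunit i) ((hLX i).trans (hr i).symm)
      simp only [L₀, of_apply, dif_pos hji]
      exact congrFun this ⟨j, hji⟩
    · rw [hL1, hL₀1]
    · rw [hL hij, hL₀ hij]

def appendCols (P : Matrix (Fin l) (Fin d) R) (Q : Matrix (Fin l) (Fin m) R) :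
    Matrix (Fin l) (Fin (d + m)) R :=
  of fun i j => if h : (j : ℕ) < d then P i ⟨j, h⟩ else Q i ⟨j - d, by omega⟩

theorem mul_appendCols [NonUnitalNonAssocSemiring R] {k : ℕ} (W : Matrix (Fin k) (Fin l) R)
    (P : Matrix (Fin l) (Fin d) R) (Q : Matrix (Fin l) (Fin m) R) :
    W * appendCols P Q = appendCols (W * P) (W * Q) := by
  ext i j
  by_cases h : (j : ℕ) < d <;> simp [appendCols, mul_apply, h]

theorem isUpperTriangular_appendCols_submatrix_iff [Zero R] (P : Matrix (Fin n) (Fin d) R)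
    (Q : Matrix (Fin n) (Fin m) R) (h : n ≤ d + m) :
    ((appendCols P Q).submatrix id (Fin.castLE h)).IsUpperTriangular ↔
      P.HasLowerBandwidth 0 ∧ Q.HasLowerBandwidth d := by
  refine ⟨fun hPQ => ⟨fun i k hki => ?_, fun i j hji => ?_⟩, fun ⟨hP, hQ⟩ i c (hci : c < i) => ?_⟩
  · simpa [appendCols] using hPQ (i := i) (j := ⟨k, by omega⟩) (Fin.lt_def.2 (by simpa using hki))
  · simpa [appendCols] using
      hPQ (i := i) (j := ⟨j + d, by omega⟩) (Fin.lt_def.2 (by simpa using hji))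
  · simp only [submatrix_apply, appendCols, of_apply, id]
    split_ifs with hc
    · exact hP _ _ (by simpa using hci)
    · exact hQ _ _ (by rw [Fin.lt_def] at hci; simp only [Fin.val_castLE] at hci hc ⊢; omega)

theorem hasLowerBandwidth_of_stein {K : Type*} [Field K] [StarRing K]
    {A W : Matrix (Fin n) (Fin n) K} {B : Matrix (Fin n) (Fin d) K} {δ : Fin n → K}
    (hδ : ∀ i, δ i ≠ 0) (hStein : diagonal δ - A * diagonal δ * Aᴴ = B * Bᴴ)
    (hA : A.IsLowerTriangular) (hW : W.IsLowerTriangular) (hWdet : IsUnit W.det)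
    (hWB : (W * B).HasLowerBandwidth 0) (hWA : (W * A).HasLowerBandwidth d) :
    W.HasLowerBandwidth d := by
  have hWDW : W * diagonal δ * Wᴴ = (W * B) * (W * B)ᴴ + (W * A) * (diagonal δ * (W * A)ᴴ) :=
    calc W * diagonal δ * Wᴴ = W * (B * Bᴴ + A * diagonal δ * Aᴴ) * Wᴴ := by
          rw [← sub_eq_iff_eq_add.1 hStein]
      _ = _ := by simp only [conjTranspose_mul, Matrix.mul_add, Matrix.add_mul, Matrix.mul_assoc]
  refine .of_mul_mul_conjTranspose ?_ hW hWdet (blockTriangular_diagonal δ) ?_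
  · rw [hWDW]
    exact (hWB.mul_of_width _).add (hWA.mul_isUpperTriangular
      ((blockTriangular_diagonal δ).mul (IsLowerTriangular.conjTranspose (hW.mul hA))))
  · simpa [det_diagonal, Finset.prod_ne_zero_iff] using hδ

end Matrix

/-- Band fraction representation: if `D − ADA* = BB*` with `D` positive diagonal, `A` lower
triangular, and `(B | A)` has nonvanishing leading principal minors of order `k < n`, then
there is a unique band fraction `(B, A) = M⁻¹(B̂, N)` with `M, N` lower triangular of
bandwidth `d`, `M` unit diagonal, and `B̂` "upper triangular". -/
theorem stmt11 {n d : ℕ} (A : Matrix (Fin n) (Fin n) ℂ) (B : Matrix (Fin n) (Fin d) ℂ)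
    (δ : Fin n → ℝ) (hδ : ∀ i, 0 < δ i)
    (hLT : ∀ i j : Fin n, i < j → A i j = 0)
    (hStein : Matrix.diagonal (fun i => (δ i : ℂ)) -
      A * Matrix.diagonal (fun i => (δ i : ℂ)) * Aᴴ = B * Bᴴ)
    (C : Matrix (Fin n) (Fin (d + n)) ℂ)
    (hC : C = Matrix.of fun (i : Fin n) (j : Fin (d + n)) =>
      if h : (j : ℕ) < d then B i ⟨j, h⟩
      else A i ⟨(j : ℕ) - d, by have := j.2; omega⟩)
    (hminor : ∀ k (hk : k < n),
      (C.submatrix (Fin.castLE hk.le) (Fin.castLE (by omega : k ≤ d + n))).det ≠ 0) :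
    ∃! MNB : Matrix (Fin n) (Fin n) ℂ × Matrix (Fin n) (Fin n) ℂ × Matrix (Fin n) (Fin d) ℂ,
      (∀ i j : Fin n, ((i : ℕ) < (j : ℕ) ∨ (j : ℕ) + d < (i : ℕ)) → MNB.1 i j = 0) ∧
      (∀ i : Fin n, MNB.1 i i = 1) ∧
      (∀ i j : Fin n, ((i : ℕ) < (j : ℕ) ∨ (j : ℕ) + d < (i : ℕ)) → MNB.2.1 i j = 0) ∧
      (∀ (j : Fin n) (k : Fin d), (k : ℕ) < (j : ℕ) → MNB.2.2 j k = 0) ∧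
      B = MNB.1⁻¹ * MNB.2.2 ∧ A = MNB.1⁻¹ * MNB.2.1 := by
  set X := C.submatrix id (Fin.castLE (Nat.le_add_left n d))
  have hA : A.IsLowerTriangular := fun i j hij => hLT i j hij
  have hX (W : Matrix (Fin n) (Fin n) ℂ) :
      (W * X).IsUpperTriangular ↔ (W * B).HasLowerBandwidth 0 ∧ (W * A).HasLowerBandwidth d := by
    rw [show W * X = (W * C).submatrix id (Fin.castLE (Nat.le_add_left n d)) from rfl,
      show C = appendCols B A from hC, mul_appendCols]
    exact isUpperTriangular_appendCols_submatrix_iff _ _ _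
  obtain ⟨M, ⟨hM, hM1, hMX⟩, huniq⟩ :=
    existsUnique_unitLowerTriangular_mul_isUpperTriangular X fun k hk => hminor k hk
  have hMdet := isUnit_det_of_unitLowerTriangular hM hM1
  obtain ⟨hMB, hMA⟩ := (hX M).1 hMX
  have hMband : M.HasLowerBandwidth d :=
    hasLowerBandwidth_of_stein (fun i => by exact_mod_cast (hδ i).ne') hStein hA hM hMdet hMB hMA
  refine ⟨(M, M * A, M * B), ⟨(forall_lt_or_add_lt_imp_eq_zero_iff M).2 ⟨hM, hMband⟩, hM1,
    (forall_lt_or_add_lt_imp_eq_zero_iff _).2 ⟨hM.mul hA, hMA⟩, hMB, ?_, ?_⟩, ?_⟩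
  · exact (nonsing_inv_mul_cancel_left _ _ hMdet).symm
  · exact (nonsing_inv_mul_cancel_left _ _ hMdet).symm
  rintro ⟨M', N', B'⟩ ⟨hM', hM'1, hN', hB', hBB', hAN'⟩
  obtain ⟨hM'low, -⟩ := (forall_lt_or_add_lt_imp_eq_zero_iff M').1 hM'
  obtain ⟨-, hN'band⟩ := (forall_lt_or_add_lt_imp_eq_zero_iff N').1 hN'
  have hM'det := isUnit_det_of_unitLowerTriangular hM'low hM'1
  have hM'B : M' * B = B' := by rw [hBB', mul_nonsing_inv_cancel_left _ _ hM'det]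
  have hM'A : M' * A = N' := by rw [hAN', mul_nonsing_inv_cancel_left _ _ hM'det]
  obtain rfl : M' = M := huniq M' ⟨hM'low, hM'1, (hX M').2 ⟨hM'B ▸ hB', hM'A ▸ hN'band⟩⟩
  rw [hM'A, hM'B]
end

section
/- For a single-input lower triangular input normal pair (d = 1), if (A,B) is controllable then the n×(n+1) matrix (B | A) has nonvanishing leading principal k×k minors for all k < n; hence every controllable single-input TIN pair admits the band fraction representation with bidiagonal M and N. -/
/-!
Write `C = (B | A)`. Input normality `A Aᴴ + B Bᴴ = 1` says that the rows of `C` are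
orthonormal, and triangularity of `A` says that `C` is lower Hessenberg (`C i j = 0` for
`j > i + 1`). Hence if a combination `c ᵥ* C` of rows vanishes on the first `k` columns, then
`c i = ⟪c ᵥ* C, C i⟫ = 0` whenever `i + 1 < k`.

If the leading `k × k` minor vanished, a nonzero combination of the first `k` rows would vanish
on the first `k` columns; by the above only row `k - 1` occurs, so that row of `C` is concentrated
on column `k`. Then `B (k-1) = 0` and row `k - 1` of `A` is zero off the diagonal, so the
coordinate `k - 1` of every `Aᵖ B` vanishes, contradicting controllability.

Since the leading minors are invertible, for each `i` row `i` of `C` can be cleared on the first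
`i` columns by earlier rows; by the same argument only row `i - 1` is needed. These combinations
are the rows of a unit lower bidiagonal `M`, and `M C = (M B | M A)` is upper bidiagonal.
-/

open Matrix

section Controllability

variable {R ι : Type*} [CommSemiring R] [Fintype ι] [DecidableEq ι]
  {A : Matrix ι ι R} {B : ι → R} {r : ι}

theorem Matrix.pow_mulVec_apply_eq_zero (hB : B r = 0) (hA : ∀ l, l ≠ r → A r l = 0)
    (p : ℕ) : (A ^ p *ᵥ B) r = 0 := by
  induction p with
  | zero => simpa using hB
  | succ p ih =>
    rw [pow_succ', ← mulVec_mulVec, mulVec, dotProduct,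
      Finset.sum_eq_single r (fun l _ hl => by rw [hA l hl, zero_mul]) (by simp), ih, mul_zero]

theorem Matrix.span_range_pow_mulVec_ne_top [Nontrivial R] (hB : B r = 0)
    (hA : ∀ l, l ≠ r → A r l = 0) (m : ℕ) :
    Submodule.span R (Set.range fun k : Fin m => (A ^ (k : ℕ)) *ᵥ B) ≠ ⊤ := by
  intro htop
  have hle : Submodule.span R (Set.range fun k : Fin m => (A ^ (k : ℕ)) *ᵥ B) ≤
      LinearMap.ker (LinearMap.proj r) := by
    rw [Submodule.span_le]
    rintro _ ⟨k, rfl⟩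
    exact pow_mulVec_apply_eq_zero hB hA k
  simpa using hle (htop ▸ Submodule.mem_top : Pi.single r (1 : R) ∈ _)

end Controllability

theorem Matrix.extend_vecMul {α β γ R : Type*} [Fintype α] [Fintype β]
    [NonUnitalNonAssocSemiring R] {e : α → β} (he : e.Injective) (v : α → R)
    (C : Matrix β γ R) : Function.extend e v 0 ᵥ* C = v ᵥ* C.submatrix e id := by
  funext j
  refine (Fintype.sum_of_injective e he _ _ (fun b hb => ?_) (fun a => ?_)).symm
  · rw [Function.extend_apply' _ _ _ (by simpa using hb), Pi.zero_apply, zero_mul]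
  · rw [he.extend_apply]; rfl

theorem Fin.extend_castLE_apply_eq_zero {R : Type*} [Zero R] {k m : ℕ} (h : k ≤ m)
    (v : Fin k → R) {l : Fin m} (hl : k ≤ (l : ℕ)) : Function.extend (Fin.castLE h) v 0 l = 0 := by
  refine Function.extend_apply' _ _ _ ?_
  rintro ⟨a, rfl⟩
  exact absurd a.2 (by simp at hl; omega)

theorem Matrix.exists_vecMul_apply_eq_zero_of_det_ne_zero {K : Type*} [Field K] {m p k : ℕ}
    (C : Matrix (Fin m) (Fin p) K) (hkm : k ≤ m) (hkp : k ≤ p)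
    (hdet : (C.submatrix (Fin.castLE hkm) (Fin.castLE hkp)).det ≠ 0) (i : Fin m)
    (hi : k ≤ (i : ℕ)) :
    ∃ c : Fin m → K, c i = 1 ∧ (∀ l, i < l → c l = 0) ∧
      ∀ j : Fin p, (j : ℕ) < k → (c ᵥ* C) j = 0 := by
  set L := C.submatrix (Fin.castLE hkm) (Fin.castLE hkp)
  set y : Fin k → K := (fun j => C i (Fin.castLE hkp j)) ᵥ* L⁻¹
  have hy : y ᵥ* L = fun j => C i (Fin.castLE hkp j) := by
    rw [vecMul_vecMul, nonsing_inv_mul _ (isUnit_iff_ne_zero.mpr hdet), vecMul_one]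
  refine ⟨Pi.single i 1 - Function.extend (Fin.castLE hkm) y 0, ?_, fun l hl => ?_, fun j hj => ?_⟩
  · simp [Fin.extend_castLE_apply_eq_zero hkm y hi]
  · simp [hl.ne', Fin.extend_castLE_apply_eq_zero hkm y (l := l) (by omega)]
  · rw [sub_vecMul, extend_vecMul (Fin.castLE_injective hkm), single_one_vecMul, row_def,
      Pi.sub_apply, sub_eq_zero]
    exact (congrFun hy ⟨j, hj⟩).symm

namespace Matrix

variable {m p : ℕ}

def IsLowerHessenberg {R : Type*} [Zero R] (C : Matrix (Fin m) (Fin p) R) : Prop :=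
  ∀ (i : Fin m) (j : Fin p), (i : ℕ) + 1 < (j : ℕ) → C i j = 0

theorem IsLowerHessenberg.mul {R : Type*} [NonUnitalNonAssocSemiring R]
    {C : Matrix (Fin m) (Fin p) R} (hH : C.IsLowerHessenberg) {M : Matrix (Fin m) (Fin m) R}
    (hM : M.IsLowerTriangular) : (M * C).IsLowerHessenberg := by
  intro i j hij
  rw [mul_apply]
  refine Finset.sum_eq_zero fun l _ => ?_
  rcases lt_or_ge i l with hil | hli
  · rw [hM hil, zero_mul]
  · rw [hH l j (by rw [Fin.le_def] at hli; omega), mul_zero]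

theorem IsLowerHessenberg.apply_eq_zero_of_vecMul_apply_eq_zero {R : Type*} [Semiring R]
    [StarRing R] {C : Matrix (Fin m) (Fin p) R} (hH : C.IsLowerHessenberg) (hC : C * Cᴴ = 1)
    {c : Fin m → R} {k : ℕ} (hc : ∀ j : Fin p, (j : ℕ) < k → (c ᵥ* C) j = 0) {i : Fin m}
    (hi : (i : ℕ) + 1 < k) : c i = 0 := by
  rw [← vecMul_one c, ← hC, ← vecMul_vecMul, vecMul, dotProduct]
  refine Finset.sum_eq_zero fun j _ => ?_
  rcases lt_or_ge (j : ℕ) k with hj | hj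
  · rw [hc j hj, zero_mul]
  · rw [conjTranspose_apply, hH i j (by omega), star_zero, mul_zero]

theorem IsLowerHessenberg.exists_row_eq_zero_of_det_eq_zero {K : Type*} [Field K] [StarRing K]
    {C : Matrix (Fin m) (Fin p) K} (hH : C.IsLowerHessenberg) (hC : C * Cᴴ = 1) {k : ℕ}
    (hkm : k ≤ m) (hkp : k ≤ p) (hdet : (C.submatrix (Fin.castLE hkm) (Fin.castLE hkp)).det = 0) :
    ∃ r : Fin m, (r : ℕ) + 1 = k ∧ ∀ j : Fin p, (j : ℕ) ≠ k → C r j = 0 := by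
  obtain ⟨v, hv, hvL⟩ := exists_vecMul_eq_zero_iff.mpr hdet
  set c := Function.extend (Fin.castLE hkm) v 0
  have hcC : ∀ j : Fin p, (j : ℕ) < k → (c ᵥ* C) j = 0 := fun j hj => by
    rw [extend_vecMul (Fin.castLE_injective hkm)]
    exact congrFun hvL ⟨j, hj⟩
  have hc_low : ∀ l : Fin m, (l : ℕ) + 1 < k → c l = 0 := fun l =>
    hH.apply_eq_zero_of_vecMul_apply_eq_zero hC hcC
  have hc_high : ∀ l : Fin m, k ≤ (l : ℕ) → c l = 0 := fun l =>
    Fin.extend_castLE_apply_eq_zero hkm v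
  obtain ⟨r, hr⟩ : ∃ r, c r ≠ 0 := by
    by_contra! h
    exact hv (funext fun a => by rw [← (Fin.castLE_injective hkm).extend_apply v 0 a]; exact h _)
  have hrk : (r : ℕ) + 1 = k := by
    have := mt (hc_low r) hr
    have := mt (hc_high r) hr
    omega
  have hc_single : c = Pi.single r (c r) := by
    funext l
    by_cases hl : l = r
    · subst hl; simp
    · rw [Pi.single_eq_of_ne hl]
      by_cases hlk : k ≤ (l : ℕ)
      · exact hc_high l hlk
      · exact hc_low l (by have := Fin.val_ne_of_ne hl; omega)
  refine ⟨r, hrk, fun j hj => ?_⟩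
  rcases Nat.lt_or_gt_of_ne hj with hjk | hjk
  · have := hcC j hjk
    rw [hc_single, single_vecMul] at this
    exact (mul_eq_zero.mp this).resolve_left hr
  · exact hH r j (by omega)

end Matrix

/-- For a controllable single-input lower triangular input normal pair, the matrix `(B | A)`
has nonvanishing leading principal minors of all orders `k < n`; hence the pair admits a
band fraction representation with bidiagonal `M` and `N`. -/
theorem stmt18 {n : ℕ} (A : Matrix (Fin n) (Fin n) ℂ) (B : Fin n → ℂ)
    (hLT : ∀ i j : Fin n, i < j → A i j = 0)
    (hIN : A * Aᴴ + Matrix.vecMulVec B (star B) = 1)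
    (hctrb : Submodule.span ℂ
      (Set.range fun k : Fin n => (A ^ (k : ℕ)).mulVec B) = ⊤)
    (C : Matrix (Fin n) (Fin (1 + n)) ℂ)
    (hC : C = Matrix.of fun (i : Fin n) (j : Fin (1 + n)) =>
      if h : (j : ℕ) < 1 then B i
      else A i ⟨(j : ℕ) - 1, by have := j.2; omega⟩) :
    (∀ k (hk : k < n),
      (C.submatrix (Fin.castLE hk.le) (Fin.castLE (by omega : k ≤ 1 + n))).det ≠ 0) ∧
    ∃ (M N : Matrix (Fin n) (Fin n) ℂ) (Bhat : Fin n → ℂ),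
      (∀ i j : Fin n, ((i : ℕ) < (j : ℕ) ∨ (j : ℕ) + 1 < (i : ℕ)) → M i j = 0) ∧
      (∀ i : Fin n, M i i = 1) ∧
      (∀ i j : Fin n, ((i : ℕ) < (j : ℕ) ∨ (j : ℕ) + 1 < (i : ℕ)) → N i j = 0) ∧
      (∀ j : Fin n, (j : ℕ) ≠ 0 → Bhat j = 0) ∧
      A = M⁻¹ * N ∧ B = (M⁻¹).mulVec Bhat := by
  have hCB : ∀ i, C i (Fin.castAdd n 0) = B i := fun i => by
    rw [hC, of_apply, dif_pos (by simp)]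
  have hCA : ∀ i l, C i (Fin.natAdd 1 l) = A i l := fun i l => by
    simp only [hC, of_apply, Fin.natAdd, dif_neg (by omega : ¬ 1 + (l : ℕ) < 1)]
    congr 1; ext; simp
  have hH : C.IsLowerHessenberg := fun i j hij => by
    simp only [hC, of_apply, dif_neg (by omega : ¬ (j : ℕ) < 1)]
    exact hLT _ _ (by rw [Fin.lt_def]; simp; omega)
  have hCC : C * Cᴴ = 1 := by
    rw [← hIN]
    ext i i'
    simp [mul_apply, Fin.sum_univ_add, hCB, hCA, vecMulVec_apply, add_comm]
  have hminor : ∀ k (hk : k < n),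
      (C.submatrix (Fin.castLE hk.le) (Fin.castLE (by omega : k ≤ 1 + n))).det ≠ 0 := by
    intro k hk hdet
    obtain ⟨r, hrk, hr⟩ := hH.exists_row_eq_zero_of_det_eq_zero hCC _ _ hdet
    refine span_range_pow_mulVec_ne_top (r := r) ?_ (fun l hl => ?_) n hctrb
    · rw [← hCB]; exact hr _ (by simp; omega)
    · rw [← hCA]; exact hr _ (by simp; have := Fin.val_ne_of_ne hl; omega)
  refine ⟨hminor, ?_⟩
  choose c hc_diag hc_upper hc_lower using fun i : Fin n =>
    exists_vecMul_apply_eq_zero_of_det_ne_zero C _ _ (hminor i i.2) i le_rfl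
  set M : Matrix (Fin n) (Fin n) ℂ := Matrix.of c
  have hM_tri : M.IsLowerTriangular := fun i l hil => hc_upper i l hil
  have hM_det : IsUnit M.det := by
    rw [det_of_isLowerTriangular M hM_tri]
    simp [M, hc_diag]
  have hMC : ∀ (i : Fin n) (j : Fin (1 + n)), ((j : ℕ) < i ∨ (i : ℕ) + 1 < j) → (M * C) i j = 0 := by
    rintro i j (hji | hij)
    · exact hc_lower i j hji
    · exact hH.mul hM_tri i j hij
  refine ⟨M, M * A, M *ᵥ B, fun i l hil => ?_, hc_diag, fun i l hil => ?_, fun i hi => ?_,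
    ?_, ?_⟩
  · rcases hil with hil | hli
    · exact hM_tri hil
    · exact hH.apply_eq_zero_of_vecMul_apply_eq_zero hCC (hc_lower i) hli
  · rw [← hMC i (Fin.natAdd 1 l) (by simp; omega)]
    simp [mul_apply, hCA]
  · rw [← hMC i (Fin.castAdd n 0) (by simp; omega)]
    simp [mul_apply, mulVec, dotProduct, hCB]
  · rw [← mul_assoc, nonsing_inv_mul _ hM_det, one_mul]
  · rw [mulVec_mulVec, nonsing_inv_mul _ hM_det, one_mulVec]
end
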